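/- arXiv:2308.09277 — 9 statements merged into one kernel-verified Lean document; each statement's English description precedes it below -/
import Mathlib

section
/- Consider n agents with equal weights and a sequence of T items with values v_i^t ≥ 0, where items are allocated integrally by the greedy rule: item t goes to the agent i minimizing index among those maximizing v_i^t / U_i^{t-1} (with the convention that v_i^t/0 = +∞ if v_i^t > 0). For any subset I of agents, if one forms a new instance by setting to zero the values of all agents not in I on all items, and setting to zero all agents' values on items not allocated (in the original run) to some agent in I, then running the greedy algorithm on the new instance allocates every surviving item to the same agent as in the original run. -/
/-- Agent `i`'s cumulative utility before round `t` under allocation `alloc`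
(an item may be allocated to no one if it is valued zero by all agents). -/
noncomputable def util {n : ℕ} (v : ℕ → Fin n → ℝ) (alloc : ℕ → Option (Fin n))
    (i : Fin n) (t : ℕ) : ℝ :=
  ∑ s ∈ Finset.range t, if alloc s = some i then v s i else 0

/-- `alloc` is a run of the integral greedy algorithm on `v`: items valued zero by
everyone are skipped; otherwise item `t` goes to the smallest-index agent maximizing
`v i t / U_i^{t-1}` (with the convention `v/0 = +∞` for `v > 0`, expressed here by
cross-multiplication). -/
def GreedySpec {n : ℕ} (v : ℕ → Fin n → ℝ) (alloc : ℕ → Option (Fin n)) : Prop :=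
  ∀ t : ℕ,
    (alloc t = none ↔ ∀ i, v t i = 0) ∧
    ∀ i : Fin n, alloc t = some i →
      0 < v t i ∧ ∀ j : Fin n, 0 < v t j →
        v t j * util v alloc i t < v t i * util v alloc j t ∨
        (v t i * util v alloc j t = v t j * util v alloc i t ∧ i ≤ j)

/-- Inductive structure of integral greedy allocation: zeroing out the agents outside `I`
and the items not allocated to agents of `I` leaves the greedy allocation of every
surviving item unchanged. -/
theorem greedy_inductive_structure {n : ℕ} (v : ℕ → Fin n → ℝ)
    (hv : ∀ t i, 0 ≤ v t i)
    (alloc : ℕ → Option (Fin n)) (h : GreedySpec v alloc)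
    (I : Finset (Fin n)) (v' : ℕ → Fin n → ℝ)
    (hv' : ∀ t i, v' t i =
      if i ∈ I ∧ ∃ j ∈ I, alloc t = some j then v t i else 0)
    (alloc' : ℕ → Option (Fin n)) (h' : GreedySpec v' alloc') :
    ∀ t : ℕ, (∃ j ∈ I, alloc t = some j) → alloc' t = alloc t := by
  have key : ∀ t, ((∃ j ∈ I, alloc t = some j) → alloc' t = alloc t) ∧
      ((¬ ∃ j ∈ I, alloc t = some j) → alloc' t = none) := by
    intro t
    induction t using Nat.strong_induction_on with
    | _ t ih =>
    have hutil : ∀ i ∈ I, util v' alloc' i t = util v alloc i t := by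
      intro i hi
      unfold util
      apply Finset.sum_congr rfl
      intro s hs
      have hst := Finset.mem_range.mp hs
      by_cases hsur : ∃ j ∈ I, alloc s = some j
      · rw [(ih s hst).1 hsur]
        by_cases hai : alloc s = some i
        · simp only [hai, if_pos rfl]
          rw [hv' s i]; simp [hi, hsur]
        · simp [hai]
      · rw [(ih s hst).2 hsur]
        have hne : alloc s ≠ some i := fun hc => hsur ⟨i, hi, hc⟩
        simp [hne]
    constructor
    · rintro ⟨j, hj, haj⟩
      have hsur : ∃ j ∈ I, alloc t = some j := ⟨j, hj, haj⟩
      have hvj : 0 < v t j := ((h t).2 j haj).1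
      have hv'j : v' t j = v t j := by rw [hv' t j]; simp [hj, hsur]
      have hne : alloc' t ≠ none := by
        intro hc
        have := ((h' t).1).mp hc j
        rw [hv'j] at this; linarith
      obtain ⟨k, hk⟩ : ∃ k, alloc' t = some k := Option.ne_none_iff_exists'.mp hne
      have hv'k : 0 < v' t k := ((h' t).2 k hk).1
      have hkI : k ∈ I := by
        by_contra hkI
        rw [hv' t k] at hv'k
        simp [hkI] at hv'k
      have hv'k' : v' t k = v t k := by rw [hv' t k]; simp [hkI, hsur]
      have hvk : 0 < v t k := hv'k' ▸ hv'k
      have h1 := ((h t).2 j haj).2 k hvk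
      have h2 := ((h' t).2 k hk).2 j (by rw [hv'j]; exact hvj)
      rw [hv'j, hv'k', hutil j hj, hutil k hkI] at h2
      have hkj : k = j := by
        rcases h1 with h1 | ⟨h1e, h1le⟩ <;> rcases h2 with h2 | ⟨h2e, h2le⟩
        · exfalso; linarith
        · exfalso; linarith
        · exfalso; linarith
        · exact le_antisymm h2le h1le
      rw [hk, hkj, haj]
    · intro hns
      apply ((h' t).1).mpr
      intro i
      rw [hv' t i]; simp [hns]
  intro t ht; exact (key t).1 ht
end

section
/- For n equal-weight agents with values v_i^t ∈ {0, 1} and the integral greedy algorithm (item t to argmin-index agent maximizing v_i^t/U_i^{t-1}), order agents so U_1(A_1) ≤ ... ≤ U_n(A_n). Then for every i and every k > i, the number of items allocated to agent k that some agent j ≤ i values at 1 is at most U_i(A_i) + 1. -/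
open scoped Classical

/-- `alloc` is a run of the integral greedy algorithm on `v` over rounds `t < T`. -/
def GreedySpecOn {n : ℕ} (T : ℕ) (v : ℕ → Fin n → ℝ) (alloc : ℕ → Option (Fin n)) : Prop :=
  ∀ t < T,
    (alloc t = none ↔ ∀ i, v t i = 0) ∧
    ∀ i : Fin n, alloc t = some i →
      0 < v t i ∧ ∀ j : Fin n, 0 < v t j →
        v t j * util v alloc i t < v t i * util v alloc j t ∨
        (v t i * util v alloc j t = v t j * util v alloc i t ∧ i ≤ j)

/-- Agent `i`'s total value for the bundle of items allocated to agent `j`. -/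
noncomputable def bundleVal {n : ℕ} (T : ℕ) (v : ℕ → Fin n → ℝ)
    (alloc : ℕ → Option (Fin n)) (i j : Fin n) : ℝ :=
  ∑ t ∈ Finset.range T, if alloc t = some j then v t i else 0

/-- With binary values and agents ordered by increasing greedy utility, the number of
items allocated to a richer agent `k > i` that some agent `j ≤ i` values at `1` is at
most `U_i(A_i) + 1`. -/
theorem greedy_binary_items_bound (n T : ℕ) (v : ℕ → Fin n → ℝ)
    (hbin : ∀ t < T, ∀ i, v t i = 0 ∨ v t i = 1)
    (alloc : ℕ → Option (Fin n)) (hspec : GreedySpecOn T v alloc)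
    (hord : ∀ i j : Fin n, i ≤ j → bundleVal T v alloc i i ≤ bundleVal T v alloc j j) :
    ∀ i k : Fin n, i < k →
      (((Finset.range T).filter
          (fun t => alloc t = some k ∧ ∃ j ≤ i, v t j = 1)).card : ℝ)
        ≤ bundleVal T v alloc i i + 1 := by
  intro i k hik
  set F := (Finset.range T).filter
      (fun t => alloc t = some k ∧ ∃ j ≤ i, v t j = 1) with hFdef
  have hUnn : 0 ≤ bundleVal T v alloc i i := by
    apply Finset.sum_nonneg
    intro s hs
    by_cases h : alloc s = some i
    · rw [if_pos h]
      exact le_of_lt ((hspec s (Finset.mem_range.mp hs)).2 i h).1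
    · rw [if_neg h]
  rcases F.eq_empty_or_nonempty with hE | hNE
  · rw [hE]; simp; linarith
  · set t0 := F.max' hNE with ht0def
    have ht0F : t0 ∈ F := F.max'_mem hNE
    obtain ⟨ht0r, hak, j, hji, hvj⟩ := Finset.mem_filter.mp ht0F
    have ht0 : t0 < T := Finset.mem_range.mp ht0r
    have hk := (hspec t0 ht0).2 k hak
    have hvk1 : v t0 k = 1 := by
      rcases hbin t0 ht0 k with h | h
      · linarith [hk.1]
      · exact h
    have hcmp := hk.2 j (by rw [hvj]; norm_num)
    have hlt : util v alloc k t0 < util v alloc j t0 := by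
      rcases hcmp with h | ⟨h, hkj⟩
      · rw [hvj, hvk1] at h; linarith
      · exact absurd hkj (not_le.mpr (lt_of_le_of_lt hji hik))
    have h1 : util v alloc j t0 ≤ bundleVal T v alloc j j := by
      unfold util bundleVal
      apply Finset.sum_le_sum_of_subset_of_nonneg
        (Finset.range_subset_range.mpr (le_of_lt ht0))
      intro s hs _
      by_cases h : alloc s = some j
      · rw [if_pos h]
        exact le_of_lt ((hspec s (Finset.mem_range.mp hs)).2 j h).1
      · rw [if_neg h]
    have h2 : bundleVal T v alloc j j ≤ bundleVal T v alloc i i := hord j i hji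
    have h3 : ((F.erase t0).card : ℝ) ≤ util v alloc k t0 := by
      unfold util
      calc ((F.erase t0).card : ℝ) = ∑ _s ∈ F.erase t0, (1 : ℝ) := by simp
        _ = ∑ s ∈ F.erase t0, (if alloc s = some k then v s k else 0) := by
            apply Finset.sum_congr rfl
            intro s hs
            have hsF := Finset.mem_of_mem_erase hs
            obtain ⟨hsr, hsk, -⟩ := Finset.mem_filter.mp hsF
            have hsT := Finset.mem_range.mp hsr
            have hvsk : v s k = 1 := by
              rcases hbin s hsT k with h | h
              · linarith [((hspec s hsT).2 k hsk).1]
              · exact h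
            rw [if_pos hsk, hvsk]
        _ ≤ ∑ s ∈ Finset.range t0, (if alloc s = some k then v s k else 0) := by
            apply Finset.sum_le_sum_of_subset_of_nonneg
            · intro s hs
              have hne := Finset.ne_of_mem_erase hs
              have hsF := Finset.mem_of_mem_erase hs
              exact Finset.mem_range.mpr (lt_of_le_of_ne (F.le_max' s hsF) hne)
            · intro s hs _
              have hsT : s < T := lt_trans (Finset.mem_range.mp hs) ht0
              by_cases h : alloc s = some k
              · rw [if_pos h]
                exact le_of_lt ((hspec s hsT).2 k h).1
              · rw [if_neg h]
    have hcard : ((F.erase t0).card : ℝ) = (F.card : ℝ) - 1 := by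
      rw [Finset.card_erase_of_mem ht0F]
      have h1 : 1 ≤ F.card := Finset.card_pos.mpr hNE
      push_cast [h1]
      ring
    linarith
end

section
/- For n equal-weight agents with binary values v_i^t ∈ {0,1} allocated by the integral greedy algorithm, with agents ordered so that U_1 ≤ ... ≤ U_n (where U_i = U_i(A_i)), any Nash-welfare-maximizing (possibly fractional) offline allocation with utilities U_i^* satisfies U_i^*/U_i ≤ (n − i + 1) + 1/U_i^* for each i. Consequently, if all U_i → ∞ as T → ∞, the competitive ratio (prod_i U_i^*/U_i)^{1/n} is asymptotically at most (n!)^{1/n}. -/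
private theorem greedy_binary_nash_aux (n T : ℕ) (hn : 0 < n) (v : ℕ → Fin n → ℝ)
    (hbin : ∀ t < T, ∀ i, v t i = 0 ∨ v t i = 1)
    (alloc : ℕ → Option (Fin n)) (hspec : GreedySpecOn T v alloc)
    (hord : ∀ i j : Fin n, i ≤ j → bundleVal T v alloc i i ≤ bundleVal T v alloc j j)
    (hUpos : ∀ i, 0 < bundleVal T v alloc i i)
    (xstar : ℕ → Fin n → ℝ)
    (hx0 : ∀ t i, 0 ≤ xstar t i) (hx1 : ∀ t, ∑ i, xstar t i ≤ 1)
    (hopt : ∀ y : ℕ → Fin n → ℝ, (∀ t i, 0 ≤ y t i) → (∀ t, ∑ i, y t i ≤ 1) →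
      ∏ i, ∑ t ∈ Finset.range T, y t i * v t i ≤
        ∏ i, ∑ t ∈ Finset.range T, xstar t i * v t i)
    (hUstarpos : ∀ i, 0 < ∑ t ∈ Finset.range T, xstar t i * v t i) :
    ∀ i : Fin n, (∑ t ∈ Finset.range T, xstar t i * v t i) ≤
      ((n : ℝ) - (i : ℕ)) * bundleVal T v alloc i i := by
  classical
  set Ustar : Fin n → ℝ := fun i => ∑ t ∈ Finset.range T, xstar t i * v t i with hUstar
  -- basic facts
  have hval : ∀ t < T, ∀ j : Fin n, alloc t = some j → v t j = 1 := by
    intro t ht j hj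
    rcases hbin t ht j with h | h
    · exfalso; have := ((hspec t ht).2 j hj).1; rw [h] at this; exact lt_irrefl _ this
    · exact h
  have hvnn : ∀ t < T, ∀ j : Fin n, 0 ≤ v t j := by
    intro t ht j; rcases hbin t ht j with h | h <;> rw [h] <;> norm_num
  have hutil : ∀ t ≤ T, ∀ j : Fin n,
      util v alloc j t = (((Finset.range t).filter (fun s => alloc s = some j)).card : ℝ) := by
    intro t ht j
    unfold util
    rw [← Finset.sum_boole]
    refine Finset.sum_congr rfl fun s hs => ?_
    by_cases h : alloc s = some j
    · rw [if_pos h, if_pos h, hval s (lt_of_lt_of_le (Finset.mem_range.1 hs) ht) j h]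
    · rw [if_neg h, if_neg h]
  have hbundle : ∀ j : Fin n,
      bundleVal T v alloc j j
        = (((Finset.range T).filter (fun s => alloc s = some j)).card : ℝ) := by
    intro j
    unfold bundleVal
    rw [← Finset.sum_boole]
    refine Finset.sum_congr rfl fun s hs => ?_
    by_cases h : alloc s = some j
    · rw [if_pos h, if_pos h, hval s (Finset.mem_range.1 hs) j h]
    · rw [if_neg h, if_neg h]
  -- exchange lemma
  have hexch : ∀ t < T, ∀ k m : Fin n, k ≠ m → 0 < xstar t k → v t k = 1 → v t m = 1 →
      Ustar k ≤ Ustar m := by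
    intro t ht k m hkm hxk hvk hvm
    by_contra hcon
    push_neg at hcon
    set ε : ℝ := min (xstar t k) ((Ustar k - Ustar m) / 2) with hεdef
    have hε : 0 < ε := lt_min hxk (by linarith)
    have hε1 : ε ≤ xstar t k := min_le_left _ _
    have hε2 : ε ≤ (Ustar k - Ustar m) / 2 := min_le_right _ _
    set y : ℕ → Fin n → ℝ := fun s p =>
      xstar s p + (if s = t ∧ p = k then -ε else 0) + (if s = t ∧ p = m then ε else 0)
      with hydef
    have hy0 : ∀ s p, 0 ≤ y s p := by
      intro s p
      by_cases h1 : s = t ∧ p = k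
      · have h2 : ¬ (s = t ∧ p = m) := fun h => hkm (h1.2 ▸ h.2 ▸ rfl)
        simp only [hydef, if_pos h1, if_neg h2, add_zero]
        rw [h1.1, h1.2]; linarith
      · by_cases h2 : s = t ∧ p = m
        · simp only [hydef, if_neg h1, if_pos h2, add_zero]
          have := hx0 s p; linarith
        · simp only [hydef, if_neg h1, if_neg h2, add_zero]
          exact hx0 s p
    have hy1 : ∀ s, ∑ p, y s p ≤ 1 := by
      intro s
      by_cases hs : s = t
      · have hterm : ∀ p : Fin n, y s p
            = xstar s p + ((if p = k then -ε else 0) + (if p = m then ε else 0)) := by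
          intro p
          simp only [hydef, hs]
          by_cases h1 : p = k <;> by_cases h2 : p = m <;> simp [h1, h2] <;> ring
        calc ∑ p, y s p
            = ∑ p : Fin n, (xstar s p + ((if p = k then -ε else 0) + (if p = m then ε else 0))) :=
              Finset.sum_congr rfl fun p _ => hterm p
          _ = (∑ p, xstar s p) + ((∑ p : Fin n, if p = k then -ε else 0)
                + (∑ p : Fin n, if p = m then ε else 0)) := by
              rw [Finset.sum_add_distrib, Finset.sum_add_distrib]
          _ ≤ 1 := by
              rw [Finset.sum_ite_eq' Finset.univ k fun _ => -ε,
                Finset.sum_ite_eq' Finset.univ m fun _ => ε]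
              simp only [Finset.mem_univ, if_pos]
              have := hx1 s; linarith
      · have hterm : ∀ p, y s p = xstar s p := by
          intro p
          simp only [hydef]
          rw [if_neg (fun h => hs h.1), if_neg (fun h => hs h.1)]
          ring
        calc ∑ p, y s p = ∑ p, xstar s p := Finset.sum_congr rfl fun p _ => hterm p
          _ ≤ 1 := hx1 s
    have hkey : ∀ p : Fin n, (∑ s ∈ Finset.range T, y s p * v s p)
        = Ustar p + ((if p = k then -ε else 0) + (if p = m then ε else 0)) * v t p := by
      intro p
      have expand : ∀ s ∈ Finset.range T, y s p * v s p
          = xstar s p * v s p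
            + (if s = t then ((if p = k then -ε else 0) + (if p = m then ε else 0)) * v s p
               else 0) := by
        intro s _
        by_cases hs : s = t
        · simp only [hydef, hs, if_pos, eq_self_iff_true, true_and]
          ring
        · simp only [hydef, if_neg (fun h : s = t ∧ p = k => hs h.1),
            if_neg (fun h : s = t ∧ p = m => hs h.1), if_neg hs]
          ring
      rw [Finset.sum_congr rfl expand, Finset.sum_add_distrib,
        Finset.sum_ite_eq' (Finset.range T) t
          (fun s => ((if p = k then -ε else 0) + (if p = m then ε else 0)) * v s p),
        if_pos (Finset.mem_range.2 ht)]
    have hkeyk : (∑ s ∈ Finset.range T, y s k * v s k) = Ustar k - ε := by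
      rw [hkey k, if_pos rfl, if_neg hkm, hvk]; ring
    have hkeym : (∑ s ∈ Finset.range T, y s m * v s m) = Ustar m + ε := by
      rw [hkey m, if_neg (Ne.symm hkm), if_pos rfl, hvm]; ring
    have hkeyo : ∀ p : Fin n, p ≠ k → p ≠ m →
        (∑ s ∈ Finset.range T, y s p * v s p) = Ustar p := by
      intro p h1 h2
      rw [hkey p, if_neg h1, if_neg h2]; ring
    have hle := hopt y hy0 hy1
    have hsplit : ∀ f : Fin n → ℝ,
        ∏ p, f p = f k * (f m * ∏ p ∈ (Finset.univ.erase k).erase m, f p) := by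
      intro f
      rw [← Finset.mul_prod_erase Finset.univ f (Finset.mem_univ k),
        ← Finset.mul_prod_erase (Finset.univ.erase k) f
          (Finset.mem_erase.2 ⟨Ne.symm hkm, Finset.mem_univ m⟩)]
    have hP : 0 < ∏ p ∈ (Finset.univ.erase k).erase m, Ustar p :=
      Finset.prod_pos fun p _ => hUstarpos p
    have hLHS : (∏ p, ∑ s ∈ Finset.range T, y s p * v s p)
        = (Ustar k - ε) * ((Ustar m + ε) * ∏ p ∈ (Finset.univ.erase k).erase m, Ustar p) := by
      rw [hsplit (fun p => ∑ s ∈ Finset.range T, y s p * v s p)]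
      have hcong : ∀ p ∈ (Finset.univ.erase k).erase m,
          (∑ s ∈ Finset.range T, y s p * v s p) = Ustar p := by
        intro p hp
        have h2 : p ≠ m := (Finset.mem_erase.1 hp).1
        have h1 : p ≠ k := (Finset.mem_erase.1 (Finset.mem_erase.1 hp).2).1
        exact hkeyo p h1 h2
      rw [hkeyk, hkeym, Finset.prod_congr rfl hcong]
    have hRHS : (∏ p, Ustar p)
        = Ustar k * (Ustar m * ∏ p ∈ (Finset.univ.erase k).erase m, Ustar p) :=
      hsplit Ustar
    rw [hLHS] at hle
    have hRHS' : (∏ i, ∑ t ∈ Finset.range T, xstar t i * v t i)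
        = Ustar k * (Ustar m * ∏ p ∈ (Finset.univ.erase k).erase m, Ustar p) := hRHS
    rw [hRHS'] at hle
    nlinarith [mul_pos (mul_pos hε hε) hP,
      mul_nonneg (mul_nonneg hε.le hP.le) (by linarith : (0:ℝ) ≤ Ustar k - Ustar m - 2 * ε)]
  -- main counting
  intro i
  set c : ℝ := Ustar i with hc
  have hcpos : 0 < c := hUstarpos i
  set R : Finset (Fin n) := Finset.univ.filter (fun k => c ≤ Ustar k) with hR
  set S : Finset (Fin n) := R.filter (fun k => k ≤ i) with hSdef
  have hiS : i ∈ S := by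
    rw [hSdef, hR]
    exact Finset.mem_filter.2 ⟨Finset.mem_filter.2 ⟨Finset.mem_univ _, le_refl _⟩, le_refl _⟩
  have hSc : ∀ k ∈ S, c ≤ Ustar k := by
    intro k hk
    rw [hSdef, hR] at hk
    exact (Finset.mem_filter.1 (Finset.mem_filter.1 hk).1).2
  have hSi : ∀ k ∈ S, k ≤ i := fun k hk => (Finset.mem_filter.1 hk).2
  set Ai : ℕ := ((Finset.range T).filter (fun s => alloc s = some i)).card with hAi
  have hAipos : 0 < (Ai : ℝ) := by rw [hAi, ← hbundle i]; exact hUpos i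
  have hAle : ∀ k : Fin n, k ≤ i →
      ((Finset.range T).filter (fun s => alloc s = some k)).card ≤ Ai := by
    intro k hk
    have := hord k i hk
    rw [hbundle k, hbundle i] at this
    exact_mod_cast this
  set D : Finset ℕ :=
    (Finset.range T).filter (fun t => ∃ k ∈ S, 0 < xstar t k * v t k) with hD
  -- step 1
  have h1 : (S.card : ℝ) * c ≤ ∑ k ∈ S, Ustar k := by
    have := Finset.card_nsmul_le_sum S Ustar c hSc
    rwa [nsmul_eq_mul] at this
  -- step 2
  have h2 : ∑ k ∈ S, Ustar k ≤ (D.card : ℝ) := by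
    have hcomm : ∑ k ∈ S, Ustar k = ∑ t ∈ Finset.range T, ∑ k ∈ S, xstar t k * v t k := by
      rw [hUstar]
      exact Finset.sum_comm
    rw [hcomm, hD, ← Finset.sum_boole]
    apply Finset.sum_le_sum
    intro t htT
    have htT' : t < T := Finset.mem_range.1 htT
    by_cases hq : ∃ k ∈ S, 0 < xstar t k * v t k
    · rw [if_pos hq]
      calc ∑ k ∈ S, xstar t k * v t k ≤ ∑ k ∈ S, xstar t k := by
            apply Finset.sum_le_sum
            intro k _
            rcases hbin t htT' k with h | h
            · rw [h, mul_zero]; exact hx0 t k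
            · rw [h, mul_one]
        _ ≤ ∑ k, xstar t k := by
            apply Finset.sum_le_sum_of_subset_of_nonneg (Finset.subset_univ S)
            intro k _ _; exact hx0 t k
        _ ≤ 1 := hx1 t
    · rw [if_neg hq]
      apply le_of_eq
      apply Finset.sum_eq_zero
      intro k hk
      by_contra h
      have h0 : 0 ≤ xstar t k * v t k := mul_nonneg (hx0 t k) (hvnn t htT' k)
      exact hq ⟨k, hk, lt_of_le_of_ne h0 (Ne.symm h)⟩
  -- step 3
  have hDdata : ∀ s ∈ D, s < T ∧ ∃ j : Fin n, alloc s = some j ∧ j ∈ R := by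
    intro s hs
    rw [hD] at hs
    obtain ⟨hsr, k, hkS, hk⟩ := Finset.mem_filter.1 hs
    have hsT : s < T := Finset.mem_range.1 hsr
    refine ⟨hsT, ?_⟩
    have hvk : v s k = 1 := by
      rcases hbin s hsT k with h | h
      · rw [h, mul_zero] at hk; exact absurd hk (lt_irrefl 0)
      · exact h
    have hxk : 0 < xstar s k := by rwa [hvk, mul_one] at hk
    obtain ⟨j, hj⟩ : ∃ j, alloc s = some j := by
      cases halloc : alloc s with
      | none =>
          exfalso
          have := ((hspec s hsT).1.1 halloc) k
          rw [this] at hvk; norm_num at hvk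
      | some j => exact ⟨j, rfl⟩
    refine ⟨j, hj, ?_⟩
    rw [hR]
    refine Finset.mem_filter.2 ⟨Finset.mem_univ _, ?_⟩
    rcases eq_or_ne k j with rfl | hne
    · exact hSc k hkS
    · exact le_trans (hSc k hkS) (hexch s hsT k j hne hxk hvk (hval s hsT j hj))
  have hperbundle : ∀ j ∈ R, (D.filter (fun s => alloc s = some j)).card ≤ Ai := by
    intro j hjR
    by_cases hji : j ≤ i
    · calc (D.filter (fun s => alloc s = some j)).card
          ≤ ((Finset.range T).filter (fun s => alloc s = some j)).card := by
            apply Finset.card_le_card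
            intro s hs
            obtain ⟨hsD, hsj⟩ := Finset.mem_filter.1 hs
            exact Finset.mem_filter.2 ⟨Finset.mem_range.2 (hDdata s hsD).1, hsj⟩
        _ ≤ Ai := hAle j hji
    · have hij : i < j := lt_of_not_ge hji
      have hmaps : ∀ s ∈ D.filter (fun s => alloc s = some j),
          ((Finset.range s).filter (fun u => alloc u = some j)).card ∈ Finset.range Ai := by
        intro s hs
        obtain ⟨hsD, hsj⟩ := Finset.mem_filter.1 hs
        have hsT : s < T := (hDdata s hsD).1
        rw [hD] at hsD
        obtain ⟨-, k, hkS, hk⟩ := Finset.mem_filter.1 hsD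
        have hvk : v s k = 1 := by
          rcases hbin s hsT k with h | h
          · rw [h, mul_zero] at hk; exact absurd hk (lt_irrefl 0)
          · exact h
        have hvj : v s j = 1 := hval s hsT j hsj
        have hcomp := ((hspec s hsT).2 j hsj).2 k (by rw [hvk]; norm_num)
        rcases hcomp with hlt | ⟨-, hjk⟩
        · rw [hvk, hvj, one_mul, one_mul, hutil s hsT.le j, hutil s hsT.le k] at hlt
          have hlt' : ((Finset.range s).filter (fun u => alloc u = some j)).card
              < ((Finset.range s).filter (fun u => alloc u = some k)).card := by
            exact_mod_cast hlt
          have hle2 : ((Finset.range s).filter (fun u => alloc u = some k)).card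
              ≤ ((Finset.range T).filter (fun u => alloc u = some k)).card := by
            exact Finset.card_le_card
              (Finset.monotone_filter_left _ (Finset.range_subset_range.mpr hsT.le))
          have hle3 := hAle k (hSi k hkS)
          exact Finset.mem_range.2 (lt_of_lt_of_le hlt' (le_trans hle2 hle3))
        · exact absurd (le_trans hjk (hSi k hkS)) hji
      have hinjective : Set.InjOn (fun s => ((Finset.range s).filter (fun u => alloc u = some j)).card)
          (D.filter (fun s => alloc s = some j)) := by
        have hmono : ∀ a ∈ D.filter (fun s => alloc s = some j),
            ∀ b ∈ D.filter (fun s => alloc s = some j), a < b →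
            ((Finset.range a).filter (fun u => alloc u = some j)).card
              < ((Finset.range b).filter (fun u => alloc u = some j)).card := by
          intro a ha b hb hab
          apply Finset.card_lt_card
          constructor
          · exact Finset.monotone_filter_left _ (Finset.range_subset_range.mpr hab.le)
          · intro hsub
            have haj : alloc a = some j := (Finset.mem_filter.1 ha).2
            have : a ∈ (Finset.range a).filter (fun u => alloc u = some j) :=
              hsub (Finset.mem_filter.2 ⟨Finset.mem_range.2 hab, haj⟩)
            exact absurd (Finset.mem_range.1 (Finset.mem_filter.1 this).1) (lt_irrefl a)
        intro a ha b hb hab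
        rcases lt_trichotomy a b with h | h | h
        · exact absurd hab (ne_of_lt (hmono a ha b hb h))
        · exact h
        · exact absurd hab.symm (ne_of_lt (hmono b hb a ha h))
      have := Finset.card_le_card_of_injOn
        (fun s => ((Finset.range s).filter (fun u => alloc u = some j)).card) hmaps hinjective
      rwa [Finset.card_range] at this
  have h3 : D.card ≤ R.card * Ai := by
    have hsub : D ⊆ R.biUnion (fun j => D.filter (fun s => alloc s = some j)) := by
      intro s hs
      obtain ⟨-, j, hj, hjR⟩ := hDdata s hs
      exact Finset.mem_biUnion.2 ⟨j, hjR, Finset.mem_filter.2 ⟨hs, hj⟩⟩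
    calc D.card ≤ (R.biUnion (fun j => D.filter (fun s => alloc s = some j))).card :=
          Finset.card_le_card hsub
      _ ≤ ∑ j ∈ R, (D.filter (fun s => alloc s = some j)).card := Finset.card_biUnion_le
      _ ≤ ∑ _j ∈ R, Ai := Finset.sum_le_sum hperbundle
      _ = R.card * Ai := by rw [Finset.sum_const, smul_eq_mul]
  -- cardinalities
  have hRS : R.card = S.card + (R.filter (fun k => ¬ k ≤ i)).card := by
    rw [hSdef]
    exact (Finset.card_filter_add_card_filter_not (fun k => k ≤ i)).symm
  have hbb : (R.filter (fun k => ¬ k ≤ i)).card ≤ n - 1 - (i : ℕ) := by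
    calc (R.filter (fun k => ¬ k ≤ i)).card ≤ (Finset.Ioi i).card := by
          apply Finset.card_le_card
          intro k hk
          exact Finset.mem_Ioi.2 (lt_of_not_ge (Finset.mem_filter.1 hk).2)
      _ = n - 1 - (i : ℕ) := Fin.card_Ioi i
  have hin : (i : ℕ) + 1 ≤ n := i.isLt
  have hbR : ((R.filter (fun k => ¬ k ≤ i)).card : ℝ) ≤ (n : ℝ) - 1 - (i : ℕ) := by
    calc ((R.filter (fun k => ¬ k ≤ i)).card : ℝ) ≤ ((n - 1 - (i:ℕ) : ℕ) : ℝ) :=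
          Nat.cast_le.2 hbb
      _ = (n : ℝ) - 1 - (i : ℕ) := by
          rw [Nat.cast_sub (Nat.le_sub_one_of_lt i.isLt), Nat.cast_sub hn]
          norm_num
  have hr1 : (1 : ℝ) ≤ (S.card : ℝ) := by
    have : 0 < S.card := Finset.card_pos.2 ⟨i, hiS⟩
    exact_mod_cast this
  -- combine
  have hchain : (S.card : ℝ) * c ≤ ((S.card : ℝ) + ((R.filter (fun k => ¬ k ≤ i)).card : ℝ)) * (Ai : ℝ) := by
    calc (S.card : ℝ) * c ≤ ∑ k ∈ S, Ustar k := h1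
      _ ≤ (D.card : ℝ) := h2
      _ ≤ ((R.card * Ai : ℕ) : ℝ) := Nat.cast_le.2 h3
      _ = ((S.card : ℝ) + ((R.filter (fun k => ¬ k ≤ i)).card : ℝ)) * (Ai : ℝ) := by
          rw [hRS]; push_cast; ring
  have hfin : c ≤ ((n : ℝ) - (i : ℕ)) * (Ai : ℝ) := by
    nlinarith [hchain, hbR, hr1, hAipos, hcpos,
      mul_le_mul_of_nonneg_right hbR hAipos.le,
      mul_nonneg (sub_nonneg.2 hr1)
        (mul_nonneg (by linarith : (0:ℝ) ≤ (n : ℝ) - 1 - (i:ℕ)) hAipos.le)]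
  rw [hbundle i]
  exact hfin


/-- For binary values, greedy utilities ordered increasingly (`0`-indexed agent `i`
corresponds to the `1`-indexed agent `i+1`, so `n-i+1` becomes `n-i`), any offline
Nash-welfare-maximizing fractional allocation satisfies
`Uᵢ*/Uᵢ ≤ (n-i) + 1/Uᵢ*`, and consequently the geometric-mean ratio is bounded by
the geometric mean of `(n-i) + 1/Uᵢ*` (which tends to `(n!)^{1/n}` as all `Uᵢ* → ∞`). -/
theorem greedy_binary_nash_upper (n T : ℕ) (hn : 0 < n) (v : ℕ → Fin n → ℝ)
    (hbin : ∀ t < T, ∀ i, v t i = 0 ∨ v t i = 1)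
    (alloc : ℕ → Option (Fin n)) (hspec : GreedySpecOn T v alloc)
    (hord : ∀ i j : Fin n, i ≤ j → bundleVal T v alloc i i ≤ bundleVal T v alloc j j)
    (hUpos : ∀ i, 0 < bundleVal T v alloc i i)
    (xstar : ℕ → Fin n → ℝ)
    (hx0 : ∀ t i, 0 ≤ xstar t i) (hx1 : ∀ t, ∑ i, xstar t i ≤ 1)
    (hopt : ∀ y : ℕ → Fin n → ℝ, (∀ t i, 0 ≤ y t i) → (∀ t, ∑ i, y t i ≤ 1) →
      ∏ i, ∑ t ∈ Finset.range T, y t i * v t i ≤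
        ∏ i, ∑ t ∈ Finset.range T, xstar t i * v t i)
    (hUstarpos : ∀ i, 0 < ∑ t ∈ Finset.range T, xstar t i * v t i) :
    (∀ i : Fin n,
      (∑ t ∈ Finset.range T, xstar t i * v t i) / bundleVal T v alloc i i ≤
        ((n : ℝ) - (i : ℕ)) + 1 / (∑ t ∈ Finset.range T, xstar t i * v t i)) ∧
    (∏ i, (∑ t ∈ Finset.range T, xstar t i * v t i) / bundleVal T v alloc i i)
        ^ ((1:ℝ)/(n:ℝ)) ≤
      (∏ i : Fin n, (((n : ℝ) - ((i : ℕ) : ℝ)) + 1 / (∑ t ∈ Finset.range T, xstar t i * v t i)))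
        ^ ((1:ℝ)/(n:ℝ)) := by
  have main := greedy_binary_nash_aux n T hn v hbin alloc hspec hord hUpos xstar hx0 hx1
    hopt hUstarpos
  have part1 : ∀ i : Fin n,
      (∑ t ∈ Finset.range T, xstar t i * v t i) / bundleVal T v alloc i i ≤
        ((n : ℝ) - (i : ℕ)) + 1 / (∑ t ∈ Finset.range T, xstar t i * v t i) := by
    intro i
    rw [div_le_iff₀ (hUpos i)]
    have h1 := main i
    have h2 : 0 < 1 / (∑ t ∈ Finset.range T, xstar t i * v t i) * bundleVal T v alloc i i :=
      mul_pos (one_div_pos.mpr (hUstarpos i)) (hUpos i)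
    nlinarith [h1, h2]
  refine ⟨part1, ?_⟩
  apply Real.rpow_le_rpow
  · exact Finset.prod_nonneg fun i _ => div_nonneg (hUstarpos i).le (hUpos i).le
  · exact Finset.prod_le_prod (fun i _ => div_nonneg (hUstarpos i).le (hUpos i).le)
      (fun i _ => part1 i)
  · positivity
end

section
/- Run the seeded integral greedy algorithm with seed δ > 0 on any input with n agents, T items, and values v_i^t ∈ [0, 1]: item t is allocated to the agent maximizing v_i^t/(δ + U_i^{t-1}). Then for any feasible offline allocation with utilities Ũ_i, (1/n)·sum_{i=1}^n (Ũ_i + δ)/(U_i + δ) ≤ 3 + 4/δ + 2·log(1 + 1/δ) + 2·log T, where U_i are the utilities produced by the seeded greedy algorithm. -/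
/-- Agent `i`'s cumulative utility before round `t` under the (integral) allocation `alloc`. -/
noncomputable def sutil {n : ℕ} (v : ℕ → Fin n → ℝ) (alloc : ℕ → Fin n)
    (i : Fin n) (t : ℕ) : ℝ :=
  ∑ s ∈ Finset.range t, if alloc s = i then v s i else 0

/-- `alloc` is a run of the seeded integral greedy algorithm with seed `δ`:
item `t` goes to an agent maximizing `v t i / (δ + U_i^{t-1})`. -/
def SeededGreedySpec {n : ℕ} (δ : ℝ) (T : ℕ) (v : ℕ → Fin n → ℝ)
    (alloc : ℕ → Fin n) : Prop :=
  ∀ t < T, ∀ j : Fin n,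
    v t j / (δ + sutil v alloc j t) ≤ v t (alloc t) / (δ + sutil v alloc (alloc t) t)

lemma step_ineq (a w : ℝ) (ha : 0 < a) (hw0 : 0 ≤ w) (hw1 : w ≤ 1) :
    w / a ≤ (2 * Real.log (a + w) - 2 / (a + w)) - (2 * Real.log a - 2 / a) := by
  have haw : 0 < a + w := by linarith
  have hlog : Real.log (a + w) - Real.log a = Real.log ((a + w) / a) :=
    (Real.log_div haw.ne' ha.ne').symm
  have goal2 : w / a ≤ 2 * Real.log ((a + w) / a) + (2 / a - 2 / (a + w)) := by
    rcases le_or_gt w a with h | h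
    · have h1 : 1 - ((a + w) / a)⁻¹ ≤ Real.log ((a + w) / a) :=
        Real.one_sub_inv_le_log_of_pos (by positivity)
      have h2 : ((a + w) / a)⁻¹ = a / (a + w) := by rw [inv_div]
      have h3 : 1 - a / (a + w) = w / (a + w) := by field_simp; ring
      have h4 : w / (a + w) ≤ Real.log ((a + w) / a) := by rw [h2, h3] at h1; exact h1
      have h5 : w / a ≤ 2 * (w / (a + w)) := by
        rw [div_le_iff₀ ha]
        have : 2 * (w / (a + w)) * a = 2 * w * a / (a + w) := by ring
        rw [this, le_div_iff₀ haw]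
        nlinarith [mul_le_mul_of_nonneg_left h hw0]
      have h6 : 0 ≤ 2 / a - 2 / (a + w) := by
        have : 2 / (a + w) ≤ 2 / a := by gcongr; linarith
        linarith
      linarith
    · have h1 : 0 ≤ Real.log ((a + w) / a) := by
        apply Real.log_nonneg
        rw [le_div_iff₀ ha]; linarith
      have h2 : w / a ≤ 2 / a - 2 / (a + w) := by
        rw [div_sub_div _ _ ha.ne' haw.ne', div_le_div_iff₀ ha (by positivity)]
        have hwa : (0:ℝ) < w * a := mul_pos (ha.trans h) ha
        nlinarith [mul_lt_mul_of_pos_left (show a + w < 2 by linarith) hwa]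
      linarith
  linarith [hlog ▸ goal2]

lemma sutil_nonneg {n : ℕ} (v : ℕ → Fin n → ℝ) (hv : ∀ t i, 0 ≤ v t i)
    (alloc : ℕ → Fin n) (i : Fin n) (t : ℕ) : 0 ≤ sutil v alloc i t := by
  apply Finset.sum_nonneg
  intro s _
  split
  · exact hv s i
  · exact le_refl 0

/-- Seeded integral greedy is `O(log T)`-competitive: for any feasible fractional
offline allocation with utilities `Ũᵢ`,
`(1/n) ∑ᵢ (Ũᵢ+δ)/(Uᵢ+δ) ≤ 3 + 4/δ + 2 log(1+1/δ) + 2 log T`. -/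
theorem seeded_greedy_ratio (n T : ℕ) (hn : 0 < n) (hT : 0 < T)
    (δ : ℝ) (hδ : 0 < δ) (v : ℕ → Fin n → ℝ)
    (hv : ∀ t i, v t i ∈ Set.Icc (0:ℝ) 1)
    (alloc : ℕ → Fin n) (hspec : SeededGreedySpec δ T v alloc)
    (xstar : ℕ → Fin n → ℝ)
    (hx0 : ∀ t i, 0 ≤ xstar t i) (hx1 : ∀ t, ∑ i, xstar t i ≤ 1) :
    (1/(n:ℝ)) * ∑ i,
        ((∑ t ∈ Finset.range T, xstar t i * v t i) + δ) / (sutil v alloc i T + δ)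
      ≤ 3 + 4/δ + 2 * Real.log (1 + 1/δ) + 2 * Real.log (T : ℝ) := by
  have hv0 : ∀ t i, 0 ≤ v t i := fun t i => (hv t i).1
  have hv1 : ∀ t i, v t i ≤ 1 := fun t i => (hv t i).2
  have hsnn : ∀ i t, 0 ≤ sutil v alloc i t := fun i t => sutil_nonneg v hv0 alloc i t
  have hpos : ∀ (i : Fin n) (t : ℕ), 0 < δ + sutil v alloc i t :=
    fun i t => by linarith [hsnn i t]
  have hposT : ∀ i : Fin n, 0 < sutil v alloc i T + δ :=
    fun i => by linarith [hsnn i T]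
  have hsucc : ∀ (i : Fin n) (t : ℕ),
      sutil v alloc i (t+1) = sutil v alloc i t + (if alloc t = i then v t i else 0) :=
    fun i t => Finset.sum_range_succ _ t
  have hsmono : ∀ (i : Fin n) {s t : ℕ}, s ≤ t → sutil v alloc i s ≤ sutil v alloc i t := by
    intro i s t hst
    apply Finset.sum_le_sum_of_subset_of_nonneg (Finset.range_subset_range.mpr hst)
    intro u _ _
    split
    · exact hv0 u i
    · exact le_refl 0
  have hsT : ∀ i : Fin n, sutil v alloc i T ≤ T := by
    intro i
    calc sutil v alloc i T ≤ ∑ s ∈ Finset.range T, (1:ℝ) := by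
          apply Finset.sum_le_sum; intro s _
          split
          · exact hv1 s i
          · norm_num
      _ = T := by simp
  -- potential
  set L : Fin n → ℕ → ℝ :=
    fun i t => 2 * Real.log (δ + sutil v alloc i t) - 2 / (δ + sutil v alloc i t) with hL
  have hstep : ∀ (i : Fin n) (t : ℕ),
      (if alloc t = i then v t (alloc t) else 0) / (δ + sutil v alloc i t)
        ≤ L i (t+1) - L i t := by
    intro i t
    by_cases h : alloc t = i
    · subst h
      have hs := hsucc (alloc t) t
      rw [if_pos rfl] at hs
      simp only [if_pos rfl, hL, hs, ← add_assoc]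
      exact step_ineq _ _ (hpos (alloc t) t) (hv0 t (alloc t)) (hv1 t (alloc t))
    · have hs := hsucc i t
      rw [if_neg h] at hs
      simp [hL, hs, if_neg h]
  have htel : ∀ i : Fin n,
      ∑ t ∈ Finset.range T,
        (if alloc t = i then v t (alloc t) else 0) / (δ + sutil v alloc i t)
      ≤ L i T - L i 0 := by
    intro i
    calc ∑ t ∈ Finset.range T,
          (if alloc t = i then v t (alloc t) else 0) / (δ + sutil v alloc i t)
        ≤ ∑ t ∈ Finset.range T, (L i (t+1) - L i t) :=
          Finset.sum_le_sum fun t _ => hstep i t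
      _ = L i T - L i 0 := Finset.sum_range_sub _ T
  have hT1 : (1:ℝ) ≤ (T:ℝ) := by exact_mod_cast hT
  set B : ℝ := 2/δ + 2 * Real.log (1 + 1/δ) + 2 * Real.log (T:ℝ) with hBdef
  have hB : ∀ i : Fin n, L i T - L i 0 ≤ B := by
    intro i
    have h0 : sutil v alloc i 0 = 0 := by simp [sutil]
    have hlm : Real.log ((1 + 1/δ) * (T:ℝ) * δ)
        = Real.log (1 + 1/δ) + Real.log (T:ℝ) + Real.log δ := by
      have hTpos : (0:ℝ) < (T:ℝ) := by linarith
      have hb : (0:ℝ) < 1 + 1/δ := by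
        have := one_div_pos.mpr hδ; linarith
      rw [Real.log_mul (mul_pos hb hTpos).ne' hδ.ne',
        Real.log_mul hb.ne' hTpos.ne']
    have hle : δ + sutil v alloc i T ≤ (1 + 1/δ) * (T:ℝ) * δ := by
      have : (1 + 1/δ) * (T:ℝ) * δ = (T:ℝ) * δ + (T:ℝ) := by field_simp
      rw [this]
      have h1 : δ ≤ (T:ℝ) * δ := by nlinarith
      linarith [hsT i]
    have hlogle : Real.log (δ + sutil v alloc i T) ≤ Real.log ((1 + 1/δ) * (T:ℝ) * δ) :=
      Real.log_le_log (hpos i T) hle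
    have hfr : 0 < 2 / (δ + sutil v alloc i T) := div_pos two_pos (hpos i T)
    simp only [hL, h0, add_zero, hBdef]
    have hd : 0 < 2 / δ := div_pos two_pos hδ
    rw [hlm] at hlogle
    linarith
  -- per-agent bound from greedy
  have hmain : ∀ i : Fin n,
      ((∑ t ∈ Finset.range T, xstar t i * v t i) + δ) / (sutil v alloc i T + δ)
      ≤ (∑ t ∈ Finset.range T,
          xstar t i * (v t (alloc t) / (δ + sutil v alloc (alloc t) t))) + 1 := by
    intro i
    rw [add_div, Finset.sum_div]
    have p2 : δ / (sutil v alloc i T + δ) ≤ 1 := by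
      rw [div_le_one (hposT i)]; linarith [hsnn i T]
    have p1 : ∀ t ∈ Finset.range T,
        xstar t i * v t i / (sutil v alloc i T + δ)
          ≤ xstar t i * (v t (alloc t) / (δ + sutil v alloc (alloc t) t)) := by
      intro t ht
      rw [mul_div_assoc]
      apply mul_le_mul_of_nonneg_left _ (hx0 t i)
      have e1 : v t i / (sutil v alloc i T + δ) ≤ v t i / (δ + sutil v alloc i t) := by
        apply div_le_div_of_nonneg_left (hv0 t i) (hpos i t)
        linarith [hsmono i (Nat.le_of_lt (Finset.mem_range.mp ht))]
      exact e1.trans (hspec t (Finset.mem_range.mp ht) i)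
    have := Finset.sum_le_sum p1
    linarith
  -- sum over agents
  have sum1 : ∑ i, ((∑ t ∈ Finset.range T, xstar t i * v t i) + δ) / (sutil v alloc i T + δ)
      ≤ (∑ i, ∑ t ∈ Finset.range T,
          xstar t i * (v t (alloc t) / (δ + sutil v alloc (alloc t) t))) + n := by
    calc ∑ i, ((∑ t ∈ Finset.range T, xstar t i * v t i) + δ) / (sutil v alloc i T + δ)
        ≤ ∑ i, ((∑ t ∈ Finset.range T,
            xstar t i * (v t (alloc t) / (δ + sutil v alloc (alloc t) t))) + 1) :=
          Finset.sum_le_sum fun i _ => hmain i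
      _ = _ := by
          rw [Finset.sum_add_distrib, Finset.sum_const, Finset.card_univ,
            Fintype.card_fin, nsmul_eq_mul, mul_one]
  have sum2 : ∑ i, ∑ t ∈ Finset.range T,
      xstar t i * (v t (alloc t) / (δ + sutil v alloc (alloc t) t))
      ≤ ∑ t ∈ Finset.range T, v t (alloc t) / (δ + sutil v alloc (alloc t) t) := by
    rw [Finset.sum_comm]
    apply Finset.sum_le_sum
    intro t _
    rw [← Finset.sum_mul]
    have hr : 0 ≤ v t (alloc t) / (δ + sutil v alloc (alloc t) t) :=
      div_nonneg (hv0 t (alloc t)) (hpos (alloc t) t).le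
    calc (∑ i, xstar t i) * (v t (alloc t) / (δ + sutil v alloc (alloc t) t))
        ≤ 1 * (v t (alloc t) / (δ + sutil v alloc (alloc t) t)) :=
          mul_le_mul_of_nonneg_right (hx1 t) hr
      _ = _ := one_mul _
  have sum3 : ∑ t ∈ Finset.range T, v t (alloc t) / (δ + sutil v alloc (alloc t) t)
      = ∑ i, ∑ t ∈ Finset.range T,
        (if alloc t = i then v t (alloc t) else 0) / (δ + sutil v alloc i t) := by
    rw [Finset.sum_comm]
    apply Finset.sum_congr rfl
    intro t _
    have e : ∀ i : Fin n,
        (if alloc t = i then v t (alloc t) else 0) / (δ + sutil v alloc i t)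
        = if alloc t = i then v t (alloc t) / (δ + sutil v alloc i t) else 0 := by
      intro i; split <;> simp
    rw [Finset.sum_congr rfl (fun i _ => e i), Finset.sum_ite_eq]
    simp
  have sum4 : ∑ i, ∑ t ∈ Finset.range T,
      (if alloc t = i then v t (alloc t) else 0) / (δ + sutil v alloc i t)
      ≤ (n:ℝ) * B := by
    calc _ ≤ ∑ i : Fin n, (L i T - L i 0) := Finset.sum_le_sum fun i _ => htel i
      _ ≤ ∑ i : Fin n, B := Finset.sum_le_sum fun i _ => hB i
      _ = (n:ℝ) * B := by
          rw [Finset.sum_const, Finset.card_univ, Fintype.card_fin, nsmul_eq_mul]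
  have total : ∑ i, ((∑ t ∈ Finset.range T, xstar t i * v t i) + δ) / (sutil v alloc i T + δ)
      ≤ (n:ℝ) * (B + 1) := by
    have h5 := (le_of_eq sum3).trans sum4
    nlinarith [sum1, sum2]
  have hnpos : (0:ℝ) < n := by exact_mod_cast hn
  calc (1/(n:ℝ)) * ∑ i,
        ((∑ t ∈ Finset.range T, xstar t i * v t i) + δ) / (sutil v alloc i T + δ)
      ≤ (1/(n:ℝ)) * ((n:ℝ) * (B + 1)) := by
        apply mul_le_mul_of_nonneg_left total (by positivity)
    _ = B + 1 := by field_simp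
    _ ≤ 3 + 4/δ + 2 * Real.log (1 + 1/δ) + 2 * Real.log (T:ℝ) := by
        have h2d : (0:ℝ) < 2/δ := div_pos two_pos hδ
        have h4 : 4/δ = 2/δ + 2/δ := by ring
        rw [hBdef]; linarith
end

section
/- With the setup of the seeded integral greedy algorithm (seed δ > 0, values v_i^t ∈ [0,1]), for any feasible fractional offline allocation with utilities Ũ_i: (1/n)·sum_i (Ũ_i + δ)/(U_i + δ) ≤ 1 + (1/n)·sum_{τ=1}^T p^τ, where p^τ = max_i v_i^τ/(U_i^{τ-1} + δ) is the price of item τ, and moreover sum_τ p^τ = sum_i sum_τ u_i^τ/(U_i^{τ-1} + δ) where u_i^τ is the value agent i derives from item τ under the greedy allocation. -/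
/-- Ratio bounded by prices: with `p τ = maxᵢ v τ i / (δ + U_i^{τ-1})`, any feasible
fractional offline allocation satisfies
`(1/n) ∑ᵢ (Ũᵢ+δ)/(Uᵢ+δ) ≤ 1 + (1/n) ∑_τ p τ`, and moreover
`∑_τ p τ = ∑ᵢ ∑_τ u_i^τ/(U_i^{τ-1}+δ)` where `u_i^τ` is agent `i`'s realized value
from item `τ` under the seeded greedy allocation. -/
theorem seeded_greedy_price_bound (n T : ℕ) (hn : 0 < n)
    (δ : ℝ) (hδ : 0 < δ) (v : ℕ → Fin n → ℝ)
    (hv : ∀ t i, v t i ∈ Set.Icc (0:ℝ) 1)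
    (alloc : ℕ → Fin n) (hspec : SeededGreedySpec δ T v alloc)
    (p : ℕ → ℝ)
    (hp : ∀ t, IsGreatest {r : ℝ | ∃ i : Fin n, r = v t i / (δ + sutil v alloc i t)} (p t))
    (xstar : ℕ → Fin n → ℝ)
    (hx0 : ∀ t i, 0 ≤ xstar t i) (hx1 : ∀ t, ∑ i, xstar t i ≤ 1) :
    (1/(n:ℝ)) * ∑ i,
        ((∑ t ∈ Finset.range T, xstar t i * v t i) + δ) / (sutil v alloc i T + δ)
      ≤ 1 + (1/(n:ℝ)) * ∑ t ∈ Finset.range T, p t ∧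
    ∑ t ∈ Finset.range T, p t =
      ∑ i, ∑ t ∈ Finset.range T,
        (if alloc t = i then v t i else 0) / (sutil v alloc i t + δ) := by
  have hsnn : ∀ i t, 0 ≤ sutil v alloc i t := by
    intro i t
    apply Finset.sum_nonneg
    intro s _
    split
    · exact (hv s i).1
    · exact le_rfl
  have hpos : ∀ i t, 0 < δ + sutil v alloc i t := fun i t => by
    have := hsnn i t; linarith
  have hmono : ∀ i s t, s ≤ t → sutil v alloc i s ≤ sutil v alloc i t := by
    intro i s t hst
    apply Finset.sum_le_sum_of_subset_of_nonneg (Finset.range_subset_range.mpr hst)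
    intro u _ _
    split
    · exact (hv u i).1
    · exact le_rfl
  have hpt : ∀ t, t < T → p t = v t (alloc t) / (δ + sutil v alloc (alloc t) t) := by
    intro t ht
    obtain ⟨⟨j, hj⟩, hub⟩ := hp t
    apply le_antisymm
    · rw [hj]; exact hspec t ht j
    · exact hub ⟨alloc t, rfl⟩
  have hpnn : ∀ t, 0 ≤ p t := by
    intro t
    obtain ⟨⟨j, hj⟩, _⟩ := hp t
    rw [hj]
    exact div_nonneg (hv t j).1 (hpos j t).le
  have part2 : ∑ t ∈ Finset.range T, p t =
      ∑ i, ∑ t ∈ Finset.range T, (if alloc t = i then v t i else 0) / (sutil v alloc i t + δ) := by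
    rw [Finset.sum_comm]
    apply Finset.sum_congr rfl
    intro t ht
    rw [hpt t (Finset.mem_range.mp ht), Finset.sum_eq_single (alloc t)]
    · rw [if_pos rfl, add_comm δ]
    · intro j _ hj; rw [if_neg (Ne.symm hj), zero_div]
    · intro h; exact absurd (Finset.mem_univ _) h
  refine ⟨?_, part2⟩
  have key : ∀ i : Fin n,
      ((∑ t ∈ Finset.range T, xstar t i * v t i) + δ) / (sutil v alloc i T + δ)
        ≤ 1 + ∑ t ∈ Finset.range T, xstar t i * p t := by
    intro i
    rw [add_div]
    have h1 : δ / (sutil v alloc i T + δ) ≤ 1 := by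
      rw [div_le_one (by have := hpos i T; linarith)]
      linarith [hsnn i T]
    have h2 : (∑ t ∈ Finset.range T, xstar t i * v t i) / (sutil v alloc i T + δ)
        ≤ ∑ t ∈ Finset.range T, xstar t i * p t := by
      rw [Finset.sum_div]
      apply Finset.sum_le_sum
      intro t ht
      have htT : sutil v alloc i t ≤ sutil v alloc i T :=
        hmono i t T (Finset.mem_range.mp ht).le
      have hvp : v t i / (δ + sutil v alloc i t) ≤ p t := (hp t).2 ⟨i, rfl⟩
      have hstep : v t i / (sutil v alloc i T + δ) ≤ p t := by
        refine le_trans ?_ hvp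
        apply div_le_div_of_nonneg_left (hv t i).1 (hpos i t)
        linarith
      calc xstar t i * v t i / (sutil v alloc i T + δ)
          = xstar t i * (v t i / (sutil v alloc i T + δ)) := by ring
        _ ≤ xstar t i * p t := mul_le_mul_of_nonneg_left hstep (hx0 t i)
    linarith
  have sum_key : ∑ i, ((∑ t ∈ Finset.range T, xstar t i * v t i) + δ) / (sutil v alloc i T + δ)
      ≤ (n : ℝ) + ∑ t ∈ Finset.range T, p t := by
    calc ∑ i, ((∑ t ∈ Finset.range T, xstar t i * v t i) + δ) / (sutil v alloc i T + δ)
        ≤ ∑ i : Fin n, (1 + ∑ t ∈ Finset.range T, xstar t i * p t) :=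
          Finset.sum_le_sum (fun i _ => key i)
      _ = (n : ℝ) + ∑ t ∈ Finset.range T, (∑ i, xstar t i) * p t := by
          rw [Finset.sum_add_distrib, Finset.sum_const, Finset.card_univ, Fintype.card_fin,
            nsmul_eq_mul, mul_one, Finset.sum_comm]
          congr 1
          exact Finset.sum_congr rfl (fun t _ => (Finset.sum_mul _ _ _).symm)
      _ ≤ (n : ℝ) + ∑ t ∈ Finset.range T, p t := by
          apply add_le_add le_rfl
          apply Finset.sum_le_sum
          intro t _
          calc (∑ i, xstar t i) * p t ≤ 1 * p t :=
                mul_le_mul_of_nonneg_right (hx1 t) (hpnn t)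
            _ = p t := one_mul _
  have hn' : (0:ℝ) < n := Nat.cast_pos.mpr hn
  calc (1/(n:ℝ)) * ∑ i, ((∑ t ∈ Finset.range T, xstar t i * v t i) + δ) / (sutil v alloc i T + δ)
      ≤ (1/(n:ℝ)) * ((n : ℝ) + ∑ t ∈ Finset.range T, p t) := by
        apply mul_le_mul_of_nonneg_left sum_key
        positivity
    _ = 1 + (1/(n:ℝ)) * ∑ t ∈ Finset.range T, p t := by
        field_simp
end

section
/- In a two-agent integral greedy allocation with values in {0} ∪ [ε,1], let C_2 = {t : v_2^t > 0} and suppose agent 2's total utility U = U_2(A_2) → ∞. Then the number of items allocated to agent 1 but positively valued by agent 2 satisfies limsup |C_2 ∩ A_1| / U ≤ (1/ε)·(1 + log(1/ε)). -/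
open scoped Classical

private lemma tele_aux (f : ℕ → ℝ) {a b : ℕ} (h : a ≤ b) :
    ∑ t ∈ Finset.Ico a b, (f (t+1) - f t) = f b - f a := by
  rw [Finset.sum_Ico_eq_sub _ h, Finset.sum_range_sub, Finset.sum_range_sub]
  ring

private lemma card_le_of_inc_aux (f : ℕ → ℝ) {a b : ℕ} (hab : a ≤ b) (S : Finset ℕ)
    (hS : S ⊆ Finset.Ico a b) (c : ℝ)
    (hmono : ∀ t, a ≤ t → t < b → 0 ≤ f (t+1) - f t)
    (hc : ∀ t ∈ S, c ≤ f (t+1) - f t) :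
    c * S.card ≤ f b - f a := by
  have h1 : c * (S.card : ℝ) = ∑ _t ∈ S, c := by
    rw [Finset.sum_const, nsmul_eq_mul]; ring
  rw [h1, ← tele_aux f hab]
  refine le_trans (Finset.sum_le_sum hc) (Finset.sum_le_sum_of_subset_of_nonneg hS ?_)
  intro t ht _
  exact hmono t (Finset.mem_Ico.mp ht).1 (Finset.mem_Ico.mp ht).2

private lemma b2_arith (x L U ε c : ℝ) (hx0 : 0 < x) (hxlb : ε/(U+ε) ≤ x)
    (hxm : x * c ≤ L + x) (hc1 : 1 ≤ c) (hUε : 0 < U + ε) : ε * c ≤ (U+ε)*L + ε := by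
  have h6 : (ε / (U + ε)) * (c - 1) ≤ x * (c - 1) :=
    mul_le_mul_of_nonneg_right hxlb (by linarith)
  have h7 : (ε / (U + ε)) * (c - 1) ≤ L := by nlinarith
  have h8 : ε * (c - 1) ≤ (U + ε) * L := by
    rw [div_mul_eq_mul_div, div_le_iff₀ hUε] at h7
    nlinarith
  linarith

/-- Two-agent integral greedy with values in `{0} ∪ [ε,1]`: as `U = U₂(A₂) → ∞`,
`limsup |C₂ ∩ A₁| / U ≤ (1/ε)(1 + log(1/ε))`, where `C₂ ∩ A₁` is the set of items
allocated to agent `1` but positively valued by agent `2`. -/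
theorem greedy_envied_items_limsup (ε : ℝ) (hε : ε ∈ Set.Ioc (0:ℝ) 1) :
    ∀ η > (0:ℝ), ∃ U₀ : ℝ,
      ∀ (T : ℕ) (v : ℕ → Fin 2 → ℝ) (alloc : ℕ → Option (Fin 2)),
        (∀ t < T, ∀ i, v t i = 0 ∨ v t i ∈ Set.Icc ε 1) →
        (∀ t < T, ∃ i, 0 < v t i) →
        GreedySpecOn T v alloc →
        U₀ ≤ bundleVal T v alloc 1 1 →
        (((Finset.range T).filter (fun t => alloc t = some 0 ∧ 0 < v t 1)).card : ℝ)
            / bundleVal T v alloc 1 1 ≤ (1/ε) * (1 + Real.log (1/ε)) + η := by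
  obtain ⟨hε0, hε1⟩ := hε
  intro η hη
  set L : ℝ := Real.log (1/ε) with hLdef
  have hL0 : 0 ≤ L := Real.log_nonneg (by rw [le_div_iff₀ hε0]; linarith)
  refine ⟨max 1 ((1/ε + L + 1)/η), ?_⟩
  intro T v alloc hval hpos hgreedy hU
  set U : ℝ := bundleVal T v alloc 1 1 with hUdef
  have hU1 : (1:ℝ) ≤ U := le_trans (le_max_left _ _) hU
  have hU0 : (0:ℝ) < U := by linarith
  have hCU : 1/ε + L + 1 ≤ η * U := by
    have h := le_trans (le_max_right _ _) hU
    rw [div_le_iff₀ hη] at h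
    nlinarith
  -- basic utility facts
  have hZT : util v alloc 1 T = U := rfl
  clear_value U
  have hstep : ∀ (i : Fin 2) (t : ℕ), util v alloc i (t+1) =
      util v alloc i t + (if alloc t = some i then v t i else 0) := by
    intro i t; exact Finset.sum_range_succ _ t
  have hincnn : ∀ (i : Fin 2), ∀ t < T, 0 ≤ (if alloc t = some i then v t i else 0) := by
    intro i t ht
    split
    · next h => exact le_of_lt (((hgreedy t ht).2 i h)).1
    · exact le_rfl
  have hmono : ∀ (i : Fin 2) (s t : ℕ), s ≤ t → t ≤ T → util v alloc i s ≤ util v alloc i t := by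
    intro i s t hst htT
    induction t with
    | zero => interval_cases s; exact le_rfl
    | succ n ih =>
      rcases Nat.lt_succ_iff_lt_or_eq.mp (Nat.lt_succ_of_le hst) with h | h
      · have h1 : util v alloc i s ≤ util v alloc i n :=
          ih (Nat.le_of_lt_succ h) (le_trans (Nat.le_succ n) htT)
        have h2 := hincnn i n (lt_of_lt_of_le (Nat.lt_succ_self n) htT)
        rw [hstep i n]
        linarith
      · subst h; exact le_rfl
  have hutil0 : ∀ i : Fin 2, util v alloc i 0 = 0 := by intro i; simp [util]
  have hnn : ∀ (i : Fin 2) (t : ℕ), t ≤ T → 0 ≤ util v alloc i t := by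
    intro i t htT
    have := hmono i 0 t (Nat.zero_le _) htT
    rwa [hutil0] at this
  set B := (Finset.range T).filter (fun t => alloc t = some 0 ∧ 0 < v t 1) with hBdef
  have hmemB : ∀ t, t ∈ B ↔ t < T ∧ (alloc t = some 0 ∧ 0 < v t 1) := by
    intro t; rw [hBdef, Finset.mem_filter, Finset.mem_range]
  -- per-round facts for t ∈ B
  have hround : ∀ t ∈ B, ε ≤ v t 0 ∧ v t 0 ≤ 1 ∧
      util v alloc 0 (t+1) = util v alloc 0 t + v t 0 ∧
      ε * util v alloc 0 t ≤ v t 0 * U ∧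
      ε * util v alloc 0 t ≤ U ∧ 0 ≤ util v alloc 0 t := by
    intro t htB
    obtain ⟨htT, ha, hv1⟩ := (hmemB t).mp htB
    have hspec := (hgreedy t htT).2 0 ha
    have hv0 : 0 < v t 0 := hspec.1
    have hicc0 : ε ≤ v t 0 ∧ v t 0 ≤ 1 := by
      rcases hval t htT 0 with h | h
      · exact absurd h (ne_of_gt hv0)
      · exact ⟨h.1, h.2⟩
    have hicc1 : ε ≤ v t 1 ∧ v t 1 ≤ 1 := by
      rcases hval t htT 1 with h | h
      · exact absurd h (ne_of_gt hv1)
      · exact ⟨h.1, h.2⟩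
    have hcmp : v t 1 * util v alloc 0 t ≤ v t 0 * util v alloc 1 t := by
      rcases hspec.2 1 hv1 with h | h
      · exact le_of_lt h
      · exact le_of_eq h.1.symm
    have hWnn : 0 ≤ util v alloc 0 t := hnn 0 t htT.le
    have hZnn : 0 ≤ util v alloc 1 t := hnn 1 t htT.le
    have hZU : util v alloc 1 t ≤ U := by
      have := hmono 1 t T htT.le le_rfl
      rwa [hZT] at this
    have hεW : ε * util v alloc 0 t ≤ v t 0 * U := by
      have h1 : ε * util v alloc 0 t ≤ v t 1 * util v alloc 0 t :=
        mul_le_mul_of_nonneg_right hicc1.1 hWnn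
      have h2 : v t 0 * util v alloc 1 t ≤ v t 0 * U :=
        mul_le_mul_of_nonneg_left hZU hv0.le
      linarith
    have hstepW : util v alloc 0 (t+1) = util v alloc 0 t + v t 0 := by
      rw [hstep 0 t, if_pos ha]
    refine ⟨hicc0.1, hicc0.2, hstepW, hεW, ?_, hWnn⟩
    nlinarith [hicc0.2, hU0]
  set B1 := B.filter (fun t => util v alloc 0 t ≤ U) with hB1def
  set B2 := B.filter (fun t => ¬ util v alloc 0 t ≤ U) with hB2def
  have hsplit : B1.card + B2.card = B.card :=
    Finset.card_filter_add_card_filter_not _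
  have hmemB1 : ∀ t, t ∈ B1 ↔ t ∈ B ∧ util v alloc 0 t ≤ U := by
    intro t; rw [hB1def, Finset.mem_filter]
  have hmemB2 : ∀ t, t ∈ B2 ↔ t ∈ B ∧ ¬ util v alloc 0 t ≤ U := by
    intro t; rw [hB2def, Finset.mem_filter]
  clear_value B1 B2
  have hBT : ∀ t ∈ B, t < T := by
    intro t ht; exact ((hmemB t).mp ht).1
  -- bound on B1
  have hB1bound : ε * (B1.card : ℝ) ≤ U + 1 := by
    rcases B1.eq_empty_or_nonempty with h | h
    · rw [h]; simp; linarith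
    · set t' := B1.max' h with ht'def
      have ht'B1 : t' ∈ B1 := B1.max'_mem h
      have ht'B : t' ∈ B := ((hmemB1 t').mp ht'B1).1
      have ht'T : t' < T := hBT t' ht'B
      have key : ε * (B1.card : ℝ) ≤ util v alloc 0 (t'+1) - util v alloc 0 0 :=
        card_le_of_inc_aux (fun t => util v alloc 0 t)
          (Nat.zero_le (t'+1)) B1 ?_ ε ?_ ?_
      · have h1 := (hround t' ht'B).2.2.1
        have h2 := (hround t' ht'B).2.1
        have h3 : util v alloc 0 t' ≤ U := ((hmemB1 t').mp ht'B1).2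
        rw [hutil0] at key
        simp only [sub_zero] at key
        calc ε * (B1.card : ℝ) ≤ util v alloc 0 (t'+1) := key
          _ = util v alloc 0 t' + v t' 0 := h1
          _ ≤ U + 1 := by linarith
      · intro t ht
        rw [Finset.mem_Ico]
        exact ⟨Nat.zero_le _, Nat.lt_succ_of_le (B1.le_max' t ht)⟩
      · intro t _ htlt
        have htT : t < T := lt_of_le_of_lt (Nat.le_of_lt_succ htlt) ht'T
        show 0 ≤ util v alloc 0 (t+1) - util v alloc 0 t
        rw [hstep 0 t]
        have := hincnn 0 t htT
        linarith
      · intro t ht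
        have htB : t ∈ B := ((hmemB1 t).mp ht).1
        obtain ⟨hε', _, hstepW, _, _, _⟩ := hround t htB
        show ε ≤ util v alloc 0 (t+1) - util v alloc 0 t
        rw [hstepW]
        linarith
  -- bound on B2
  have hUε : (0:ℝ) < U + ε := by linarith
  set x : ℝ := Real.log (1 + ε/U) with hxdef
  have hx0 : 0 < x := Real.log_pos (by nlinarith [div_pos hε0 hU0])
  have hxlb : ε / (U + ε) ≤ x := by
    have h1 : (0:ℝ) < U / (U + ε) := div_pos hU0 hUε
    have h2 := Real.log_le_sub_one_of_pos h1
    have h3 : Real.log (U / (U + ε)) = Real.log U - Real.log (U + ε) :=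
      Real.log_div (ne_of_gt hU0) (ne_of_gt hUε)
    have h4 : x = Real.log (U + ε) - Real.log U := by
      rw [hxdef]
      have : 1 + ε/U = (U + ε)/U := by field_simp
      rw [this, Real.log_div (ne_of_gt hUε) (ne_of_gt hU0)]
    have h5 : U / (U + ε) - 1 = -(ε / (U + ε)) := by field_simp; ring
    rw [h3, h5] at h2
    linarith
  have hB2bound : ε * (B2.card : ℝ) ≤ (U + ε) * L + ε := by
    rcases B2.eq_empty_or_nonempty with h | h
    · rw [h]; simp; nlinarith
    · set t0 := B2.min' h with ht0def
      set t' := B2.max' h with ht'def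
      have ht0B2 : t0 ∈ B2 := B2.min'_mem h
      have ht'B2 : t' ∈ B2 := B2.max'_mem h
      have ht0B : t0 ∈ B := ((hmemB2 t0).mp ht0B2).1
      have ht'B : t' ∈ B := ((hmemB2 t').mp ht'B2).1
      have ht'T : t' < T := hBT t' ht'B
      have ht0U : U < util v alloc 0 t0 :=
        lt_of_not_ge ((hmemB2 t0).mp ht0B2).2
      have ht'U : U < util v alloc 0 t' :=
        lt_of_not_ge ((hmemB2 t').mp ht'B2).2
      have hab : t0 ≤ t' + 1 := Nat.le_succ_of_le (B2.min'_le t' ht'B2)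
      -- W is positive on [t0, t'+1]
      have hWpos : ∀ t, t0 ≤ t → t ≤ t' + 1 → 0 < util v alloc 0 t := by
        intro t h1 h2
        have : util v alloc 0 t0 ≤ util v alloc 0 t :=
          hmono 0 t0 t h1 (le_trans h2 (Nat.succ_le_of_lt ht'T))
        linarith
      have key : x * (B2.card : ℝ) ≤
          Real.log (util v alloc 0 (t'+1)) - Real.log (util v alloc 0 t0) :=
        card_le_of_inc_aux (fun t => Real.log (util v alloc 0 t))
          hab B2 ?_ x ?_ ?_
      · -- x * B2.card ≤ log W(t'+1) - log W t0 ≤ log((U+ε)/ε) - log U = L + x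
        have hW't : util v alloc 0 (t'+1) = util v alloc 0 t' + v t' 0 :=
          (hround t' ht'B).2.2.1
        have hWt'le : ε * util v alloc 0 t' ≤ U := (hround t' ht'B).2.2.2.2.1
        have hv'1 : v t' 0 ≤ 1 := (hround t' ht'B).2.1
        have hub : util v alloc 0 (t'+1) ≤ (U + ε)/ε := by
          rw [hW't, le_div_iff₀ hε0]
          nlinarith [mul_le_mul_of_nonneg_right hv'1 hε0.le]
        have hWt1pos : 0 < util v alloc 0 (t'+1) := hWpos (t'+1) hab le_rfl
        have hlog1 : Real.log (util v alloc 0 (t'+1)) ≤ Real.log ((U+ε)/ε) :=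
          Real.log_le_log hWt1pos hub
        have hlog2 : Real.log U ≤ Real.log (util v alloc 0 t0) :=
          Real.log_le_log hU0 ht0U.le
        have hid : Real.log ((U+ε)/ε) - Real.log U = L + x := by
          rw [Real.log_div (ne_of_gt hUε) (ne_of_gt hε0), hLdef]
          have h4 : x = Real.log (U + ε) - Real.log U := by
            rw [hxdef]
            have : 1 + ε/U = (U + ε)/U := by field_simp
            rw [this, Real.log_div (ne_of_gt hUε) (ne_of_gt hU0)]
          rw [Real.log_div (by norm_num) (ne_of_gt hε0), h4, Real.log_one]
          ring
        have hxm : x * (B2.card : ℝ) ≤ L + x := by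
          calc x * (B2.card : ℝ)
              ≤ Real.log (util v alloc 0 (t'+1)) - Real.log (util v alloc 0 t0) := key
            _ ≤ Real.log ((U+ε)/ε) - Real.log U := by linarith
            _ = L + x := hid
        have hcard1 : (1:ℝ) ≤ (B2.card : ℝ) := by
          have hpos' : 0 < B2.card := Finset.card_pos.mpr h
          exact_mod_cast hpos'
        exact b2_arith x L U ε _ hx0 hxlb hxm hcard1 hUε
      · intro t ht
        rw [Finset.mem_Ico]
        exact ⟨B2.min'_le t ht, Nat.lt_succ_of_le (B2.le_max' t ht)⟩
      · intro t h1 h2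
        have h2' : t ≤ t' := Nat.le_of_lt_succ h2
        have htT : t < T := lt_of_le_of_lt h2' ht'T
        have hp : 0 < util v alloc 0 t := hWpos t h1 (Nat.le_succ_of_le h2')
        have hle : util v alloc 0 t ≤ util v alloc 0 (t+1) :=
          hmono 0 t (t+1) (Nat.le_succ t) (Nat.succ_le_of_lt htT)
        show 0 ≤ Real.log (util v alloc 0 (t+1)) - Real.log (util v alloc 0 t)
        have hll := Real.log_le_log hp hle
        linarith only [hll]
      · intro t ht
        have htB : t ∈ B := ((hmemB2 t).mp ht).1
        have htU : U < util v alloc 0 t := lt_of_not_ge ((hmemB2 t).mp ht).2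
        have hWt0 : 0 < util v alloc 0 t := lt_trans hU0 htU
        obtain ⟨_, _, hstepW, hεW2, _, _⟩ := hround t htB
        -- W(t+1) ≥ W t * (1 + ε/U)
        have hmul : util v alloc 0 t * (1 + ε/U) ≤ util v alloc 0 (t+1) := by
          rw [hstepW]
          have h2 : ε * util v alloc 0 t / U ≤ v t 0 := by
            rw [div_le_iff₀ hU0]; exact hεW2
          have h1 : util v alloc 0 t * (1 + ε/U) =
              util v alloc 0 t + ε * util v alloc 0 t / U := by ring
          rw [h1]
          linarith only [h2]
        have h1p : (0:ℝ) < 1 + ε/U := by positivity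
        have hlogmul : Real.log (util v alloc 0 t * (1 + ε/U)) =
            Real.log (util v alloc 0 t) + x :=
          Real.log_mul (ne_of_gt hWt0) (ne_of_gt h1p)
        have hll := Real.log_le_log (by positivity) hmul
        rw [hlogmul] at hll
        show x ≤ Real.log (util v alloc 0 (t+1)) - Real.log (util v alloc 0 t)
        linarith only [hll]
  -- combine
  have hcardsum : (B.card : ℝ) = (B1.card : ℝ) + (B2.card : ℝ) := by
    exact_mod_cast hsplit.symm
  rw [div_le_iff₀ hU0]
  have hfinal : ε * (B.card : ℝ) ≤ ε * (((1/ε) * (1 + L) + η) * U) := by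
    have hinv : ε * (1/ε) = 1 := mul_one_div_cancel (ne_of_gt hε0)
    have hC : ε * (1/ε + L + 1) ≤ ε * (η * U) :=
      mul_le_mul_of_nonneg_left hCU hε0.le
    rw [mul_add, mul_add, hinv] at hC
    rw [hcardsum]
    have hexp : ε * (((1/ε) * (1 + L) + η) * U) =
        (ε * (1/ε)) * ((1 + L) * U) + ε * (η * U) := by ring
    rw [hexp, hinv, one_mul]
    calc ε * ((B1.card : ℝ) + (B2.card : ℝ))
        = ε * (B1.card : ℝ) + ε * (B2.card : ℝ) := by ring
      _ ≤ (U + 1) + ((U + ε) * L + ε) := by linarith only [hB1bound, hB2bound]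
      _ ≤ (1 + L) * U + ε * (η * U) := by nlinarith [hC]
  exact le_of_mul_le_mul_left hfinal hε0
end

section
/- Suppose for each agent i ∈ [n] the values satisfy v_i^t ∈ {0} ∪ [ε, 1] and the monopolistic utility V_i = sum_t v_i^t satisfies V_i ≥ cT for some c ∈ (0,1]. Run PACE with projection interval [ℓ, 1] where ℓ < c·ε^2/(1 + (n−1)(1 + log(1/ε))). Then there exists d > 0 (depending on ℓ) such that for every agent i, liminf_{T→∞} U_i(A_i)/T ≥ d; moreover d/c = Ω(1/n) as n → ∞. In particular every agent's utility tends to infinity. -/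
noncomputable def pacePhi (E u : ℝ) : ℝ := min u E + E * Real.log (max u E / E)

lemma pacePhi_of_le {E u : ℝ} (hE : 0 < E) (h : u ≤ E) : pacePhi E u = u := by
  simp [pacePhi, min_eq_left h, max_eq_right h, div_self hE.ne', Real.log_one]

lemma pacePhi_of_ge {E u : ℝ} (hE : 0 < E) (h : E ≤ u) : pacePhi E u = E + E * Real.log (u / E) := by
  simp [pacePhi, min_eq_right h, max_eq_left h]

lemma pacePhi_zero {E : ℝ} (hE : 0 < E) : pacePhi E 0 = 0 := by
  rw [pacePhi_of_le hE hE.le]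

lemma pacePhi_mono {E : ℝ} (hE : 0 < E) {a b : ℝ} (hab : a ≤ b) : pacePhi E a ≤ pacePhi E b := by
  unfold pacePhi
  have h1 : min a E ≤ min b E := min_le_min hab le_rfl
  have h2 : Real.log (max a E / E) ≤ Real.log (max b E / E) := by
    apply Real.log_le_log (by positivity)
    exact (div_le_div_iff_of_pos_right hE).2 (max_le_max hab le_rfl)
  nlinarith [h2, hE.le]

lemma pacePhi_diff {E a b : ℝ} (hE : 0 < E) (ha : 0 ≤ a) (hab : a ≤ b) (hEb : E ≤ b) :
    (b - a) * E / b ≤ pacePhi E b - pacePhi E a := by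
  have hb : 0 < b := lt_of_lt_of_le hE hEb
  rcases le_or_gt a E with h | h
  · rw [pacePhi_of_ge hE hEb, pacePhi_of_le hE h]
    have hlog : b - E ≤ b * Real.log (b / E) := by
      have h1 : Real.log (E / b) ≤ E / b - 1 := Real.log_le_sub_one_of_pos (by positivity)
      have h2 : Real.log (E / b) = - Real.log (b / E) := by
        rw [Real.log_div hE.ne' hb.ne', Real.log_div hb.ne' hE.ne']; ring
      rw [h2] at h1
      have h3 : b * (E / b - 1) = E - b := by field_simp
      nlinarith [h1, hb]
    rw [div_le_iff₀ hb]
    nlinarith [mul_nonneg (sub_nonneg.2 h) (sub_nonneg.2 hEb), mul_le_mul_of_nonneg_left hlog hE.le]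
  · rw [pacePhi_of_ge hE hEb, pacePhi_of_ge hE h.le]
    have hlog : b - a ≤ b * (Real.log (b / E) - Real.log (a / E)) := by
      have ha0 : 0 < a := lt_trans hE h
      have h1 : Real.log (a / b) ≤ a / b - 1 := Real.log_le_sub_one_of_pos (by positivity)
      have h2 : Real.log (b / E) - Real.log (a / E) = - Real.log (a / b) := by
        rw [Real.log_div hb.ne' hE.ne', Real.log_div ha0.ne' hE.ne', Real.log_div ha0.ne' hb.ne']
        ring
      rw [h2]
      have h3 : b * (a / b - 1) = a - b := by field_simp
      nlinarith [h1, hb]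
    rw [div_le_iff₀ hb]
    nlinarith [mul_le_mul_of_nonneg_left hlog hE.le]

lemma pacePhi_incr {E ε a g : ℝ} (hE : 1 ≤ E) (hε : 0 < ε) (hε1 : ε ≤ 1) (ha : 0 ≤ a)
    (hεg : ε ≤ g) (hg1 : g ≤ 1) (hag : ε * a ≤ g * E) :
    ε * E / (E + 1) ≤ pacePhi E (a + g) - pacePhi E a := by
  have hE0 : (0:ℝ) < E := lt_of_lt_of_le one_pos hE
  have hg0 : 0 < g := lt_of_lt_of_le hε hεg
  rcases le_or_gt (a + g) E with h | h
  · rw [pacePhi_of_le hE0 h, pacePhi_of_le hE0 (by linarith : a ≤ E)]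
    have : ε * E / (E + 1) ≤ ε := by
      rw [div_le_iff₀ (by linarith)]; nlinarith
    linarith
  · have hdiff := pacePhi_diff hE0 ha (by linarith : a ≤ a + g) h.le
    have hb : (0:ℝ) < a + g := by linarith
    have h2 : ε * E / (E + 1) ≤ (a + g - a) * E / (a + g) := by
      rw [div_le_div_iff₀ (by linarith) hb]
      nlinarith [mul_le_mul_of_nonneg_left hag hE0.le, mul_pos hE0 hg0]
    linarith

/-- Agent `i`'s cumulative utility before round `t` under the PACE allocation `alloc`. -/
noncomputable def putil {n : ℕ} (v : ℕ → Fin n → ℝ) (alloc : ℕ → Fin n)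
    (i : Fin n) (t : ℕ) : ℝ :=
  ∑ s ∈ Finset.range t, if alloc s = i then v s i else 0

/-- The projected (estimated) utility used by PACE at round `t`:
the cumulative utility `U_i^{t-1}` projected to the interval `[ℓ·t, r·t]` with `r = 1`
(at the very first round PACE initializes all pacing multipliers to `1`). -/
noncomputable def hatU {n : ℕ} (ℓ : ℝ) (v : ℕ → Fin n → ℝ) (alloc : ℕ → Fin n)
    (i : Fin n) (t : ℕ) : ℝ :=
  if t = 0 then 1 else min (t : ℝ) (max (ℓ * t) (putil v alloc i t))

/-- `alloc` is a run of PACE with projection interval `[ℓ, 1]`: item `t` goes to the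
smallest-index agent maximizing `v t i / Û_i^{t-1}` (stated cross-multiplied). -/
def PaceSpec {n : ℕ} (ℓ : ℝ) (T : ℕ) (v : ℕ → Fin n → ℝ) (alloc : ℕ → Fin n) : Prop :=
  ∀ t < T, ∀ j : Fin n,
    v t j * hatU ℓ v alloc (alloc t) t < v t (alloc t) * hatU ℓ v alloc j t ∨
    (v t (alloc t) * hatU ℓ v alloc j t = v t j * hatU ℓ v alloc (alloc t) t ∧ alloc t ≤ j)

set_option maxHeartbeats 2000000

/-- If every agent has values in `{0} ∪ [ε,1]` and monopolistic utility `V_i ≥ cT`,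
then PACE with `r = 1` and `ℓ < cε²/(1+(n-1)(1+log(1/ε)))` gives every agent utility
at least `(d - o(1))·T` for some constant `d > 0` with `d/c = Ω(1/n)`
(concretely `d ≥ cε/(2n(1+log(1/ε)))`); in particular all utilities tend to infinity. -/
theorem pace_linear_utility (n : ℕ) (hn : 0 < n) (ε c ℓ : ℝ)
    (hε : ε ∈ Set.Ioc (0:ℝ) 1) (hc : c ∈ Set.Ioc (0:ℝ) 1) (hℓ : 0 < ℓ)
    (hℓub : ℓ < c * ε ^ 2 / (1 + ((n : ℝ) - 1) * (1 + Real.log (1 / ε)))) :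
    ∃ d > (0:ℝ), c * ε / (2 * n * (1 + Real.log (1 / ε))) ≤ d ∧
      ∀ η > (0:ℝ), ∃ T₀ : ℕ, ∀ T ≥ T₀, ∀ (v : ℕ → Fin n → ℝ) (alloc : ℕ → Fin n),
        (∀ t < T, ∀ i, v t i = 0 ∨ v t i ∈ Set.Icc ε 1) →
        (∀ i, c * T ≤ ∑ t ∈ Finset.range T, v t i) →
        PaceSpec ℓ T v alloc →
        ∀ i, (d - η) * T ≤ putil v alloc i T := by
  classical
  obtain ⟨hε0, hε1⟩ := hε
  obtain ⟨hc0, hc1⟩ := hc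
  obtain ⟨K, hKdef⟩ : ∃ K : ℝ, K = 1 + Real.log (1 / ε) := ⟨_, rfl⟩
  have hK1 : 1 ≤ K := by
    have h := Real.log_nonneg (show (1:ℝ) ≤ 1 / ε by rw [le_div_iff₀ hε0]; linarith)
    rw [hKdef]; linarith
  have hn1 : (1:ℝ) ≤ (n:ℝ) := by exact_mod_cast hn
  obtain ⟨N1, hN1def⟩ : ∃ N1 : ℝ, N1 = (n:ℝ) - 1 := ⟨_, rfl⟩
  have hN10 : 0 ≤ N1 := by rw [hN1def]; linarith
  obtain ⟨D, hDdef⟩ : ∃ D : ℝ, D = 1 + N1 * K := ⟨_, rfl⟩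
  have hD1 : 1 ≤ D := by rw [hDdef]; nlinarith
  have hD0 : 0 < D := by linarith
  have hℓub' : ℓ < c * ε ^ 2 / D := by rw [hDdef, hN1def, hKdef]; exact hℓub
  have hℓ1 : ℓ ≤ 1 := by
    have h1 : c * ε ^ 2 / D ≤ 1 := by
      rw [div_le_one hD0]; nlinarith
    linarith
  refine ⟨c * ε / D, by positivity, ?_, ?_⟩
  · apply div_le_div_of_nonneg_left (by positivity) hD0
    nlinarith
  intro η hη
  obtain ⟨C0, hC0def⟩ : ∃ C0 : ℝ, C0 = N1 * K + 2 * n := ⟨_, rfl⟩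
  have hC00 : 0 ≤ C0 := by rw [hC0def]; positivity
  refine ⟨max (Nat.ceil (C0 / η)) (Nat.ceil (1 / ℓ)), ?_⟩
  intro T hT v alloc hv hV hspec i
  -- basic consequences of T ≥ T₀
  have hTC : C0 ≤ η * T := by
    have h1 : C0 / η ≤ (T:ℝ) := by
      have := Nat.le_ceil (C0 / η)
      have h2 : (Nat.ceil (C0 / η) : ℝ) ≤ T := by
        exact_mod_cast le_trans (le_max_left _ _) hT
      linarith
    rw [div_le_iff₀ hη] at h1; linarith
  have hTℓ : 1 ≤ ℓ * T := by
    have h1 : 1 / ℓ ≤ (T:ℝ) := by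
      have := Nat.le_ceil (1 / ℓ)
      have h2 : (Nat.ceil (1 / ℓ) : ℝ) ≤ T := by
        exact_mod_cast le_trans (le_max_right _ _) hT
      linarith
    rw [div_le_iff₀ hℓ] at h1; linarith
  -- value facts
  have hv0 : ∀ t, t < T → ∀ j, 0 ≤ v t j := by
    intro t ht j; rcases hv t ht j with h | h
    · rw [h]
    · exact le_trans hε0.le h.1
  have hv1' : ∀ t, t < T → ∀ j, v t j ≤ 1 := by
    intro t ht j; rcases hv t ht j with h | h
    · rw [h]; norm_num
    · exact h.2
  -- putil facts
  have hstep : ∀ (j : Fin n) (t : ℕ),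
      putil v alloc j (t + 1) = putil v alloc j t + (if alloc t = j then v t j else 0) :=
    fun j t => Finset.sum_range_succ _ _
  have hmono : ∀ (j : Fin n) (s t : ℕ), s ≤ t → t ≤ T → putil v alloc j s ≤ putil v alloc j t := by
    intro j s t hst htT
    apply Finset.sum_le_sum_of_subset_of_nonneg (Finset.range_subset_range.2 hst)
    intro k hk _
    have hkT : k < T := lt_of_lt_of_le (Finset.mem_range.1 hk) htT
    split
    · exact hv0 k hkT j
    · exact le_rfl
  have hpos : ∀ (j : Fin n) (t : ℕ), t ≤ T → 0 ≤ putil v alloc j t := by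
    intro j t htT
    have h0 : putil v alloc j 0 = 0 := by simp [putil]
    have := hmono j 0 t (Nat.zero_le _) htT
    linarith
  have hub : ∀ (j : Fin n) (t : ℕ), t ≤ T → putil v alloc j t ≤ t := by
    intro j t htT
    calc putil v alloc j t ≤ ∑ s ∈ Finset.range t, (1:ℝ) := by
          apply Finset.sum_le_sum
          intro k hk
          have hkT : k < T := lt_of_lt_of_le (Finset.mem_range.1 hk) htT
          split
          · exact hv1' k hkT j
          · norm_num
      _ = t := by simp
  obtain ⟨UT, hUTdef⟩ : ∃ UT : ℝ, UT = putil v alloc i T := ⟨_, rfl⟩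
  obtain ⟨E, hEdef⟩ : ∃ E : ℝ, E = max (ℓ * T) UT := ⟨_, rfl⟩
  have hE1 : 1 ≤ E := by rw [hEdef]; exact le_trans hTℓ (le_max_left _ _)
  have hE0 : 0 < E := by linarith
  -- hatU facts
  have hhat : ∀ (j : Fin n) (t : ℕ), 1 ≤ t → t ≤ T →
      ℓ * t ≤ hatU ℓ v alloc j t ∧ putil v alloc j t ≤ hatU ℓ v alloc j t ∧
      hatU ℓ v alloc j t ≤ max (ℓ * t) (putil v alloc j t) := by
    intro j t ht1 htT
    have ht0 : t ≠ 0 := by omega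
    have htR : (1:ℝ) ≤ t := by exact_mod_cast ht1
    unfold hatU
    rw [if_neg ht0]
    have hℓtt : ℓ * t ≤ t := by
      calc ℓ * t ≤ 1 * t := mul_le_mul_of_nonneg_right hℓ1 (by linarith)
        _ = t := one_mul _
    refine ⟨le_min hℓtt (le_max_left _ _),
      le_min (hub j t htT) (le_max_right _ _), min_le_right _ _⟩
  have hhatI : ∀ t : ℕ, 1 ≤ t → t ≤ T → hatU ℓ v alloc i t ≤ E := by
    intro t ht1 htT
    rw [hEdef]
    refine le_trans (hhat i t ht1 htT).2.2 (max_le ?_ ?_)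
    · have htR : (t:ℝ) ≤ T := by exact_mod_cast htT
      have : ℓ * t ≤ ℓ * T := mul_le_mul_of_nonneg_left htR hℓ.le
      exact le_trans this (le_max_left _ _)
    · rw [hUTdef]
      exact le_trans (hmono i t T htT le_rfl) (le_max_right _ _)
  -- winner facts
  have hwinner : ∀ t : ℕ, 1 ≤ t → t < T → ε ≤ v t i →
      ε ≤ v t (alloc t) ∧ ε * putil v alloc (alloc t) t ≤ v t (alloc t) * E ∧
      ε * putil v alloc (alloc t) t ≤ E := by
    intro t ht1 htT hvti
    obtain ⟨hlb, hmid, _⟩ := hhat (alloc t) t ht1 htT.le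
    have htR : (1:ℝ) ≤ t := by exact_mod_cast ht1
    have hℓt : 0 < ℓ * t := mul_pos hℓ (lt_of_lt_of_le one_pos htR)
    have hhatw : 0 < hatU ℓ v alloc (alloc t) t := lt_of_lt_of_le hℓt hlb
    have hhati_pos : 0 < hatU ℓ v alloc i t := lt_of_lt_of_le hℓt (hhat i t ht1 htT.le).1
    have hhati_le : hatU ℓ v alloc i t ≤ E := hhatI t ht1 htT.le
    have hspec' : v t i * hatU ℓ v alloc (alloc t) t ≤ v t (alloc t) * hatU ℓ v alloc i t := by
      rcases hspec t htT i with h | ⟨h, _⟩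
      · exact h.le
      · exact h.ge
    have h1 : ε * hatU ℓ v alloc (alloc t) t ≤ v t (alloc t) * hatU ℓ v alloc i t :=
      le_trans (mul_le_mul_of_nonneg_right hvti hhatw.le) hspec'
    have hvw0 : 0 < v t (alloc t) := by
      by_contra hcon
      push_neg at hcon
      nlinarith [mul_pos hε0 hhatw]
    have hvwε : ε ≤ v t (alloc t) := by
      rcases hv t htT (alloc t) with h | h
      · rw [h] at hvw0; exact absurd hvw0 (lt_irrefl 0)
      · exact h.1
    have h2 : ε * putil v alloc (alloc t) t ≤ v t (alloc t) * E := by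
      calc ε * putil v alloc (alloc t) t ≤ ε * hatU ℓ v alloc (alloc t) t :=
            mul_le_mul_of_nonneg_left hmid hε0.le
        _ ≤ v t (alloc t) * hatU ℓ v alloc i t := h1
        _ ≤ v t (alloc t) * E := mul_le_mul_of_nonneg_left hhati_le hvw0.le
    have h3 : ε * putil v alloc (alloc t) t ≤ E := by
      calc ε * putil v alloc (alloc t) t ≤ v t (alloc t) * E := h2
        _ ≤ 1 * E := mul_le_mul_of_nonneg_right (hv1' t htT _) hE0.le
        _ = E := one_mul E
    exact ⟨hvwε, h2, h3⟩
  -- the per-agent starve sets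
  obtain ⟨S, hSdef⟩ : ∃ S : Fin n → Finset ℕ,
      S = fun j => (Finset.range T).filter (fun t => 1 ≤ t ∧ ε ≤ v t i ∧ alloc t = j) := ⟨_, rfl⟩
  have hScard : ∀ j : Fin n, ε * ((S j).card : ℝ) ≤ (E + 1) * K + 2 * ε := by
    intro j
    obtain ⟨cap, hcapdef⟩ : ∃ cap : ℝ, cap = E / ε + 1 := ⟨_, rfl⟩
    have hEcap : E ≤ cap := by
      have h : E ≤ E / ε := by
        rw [le_div_iff₀ hε0]; nlinarith
      rw [hcapdef]; linarith
    have hcap0 : 0 ≤ cap := by linarith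
    obtain ⟨W, hWdef⟩ : ∃ W : ℕ → ℝ, W = fun t => pacePhi E (min (putil v alloc j t) cap) := ⟨_, rfl⟩
    have hWmono : ∀ t, t < T → W t ≤ W (t + 1) := by
      intro t ht
      rw [hWdef]
      apply pacePhi_mono hE0
      have hps : putil v alloc j t ≤ putil v alloc j (t + 1) := by
        rw [hstep j t]
        have : 0 ≤ (if alloc t = j then v t j else 0) := by
          split
          · exact hv0 t ht j
          · exact le_rfl
        linarith
      exact min_le_min hps le_rfl
    have hkey : ∀ t ∈ S j, ε * E / (E + 1) ≤ W (t + 1) - W t := by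
      intro t htS
      rw [hSdef] at htS
      simp only [Finset.mem_filter, Finset.mem_range] at htS
      obtain ⟨htT, ht1, hvti, hal⟩ := htS
      obtain ⟨hvw, hchain, hcapb⟩ := hwinner t ht1 htT hvti
      rw [hal] at hvw hchain hcapb
      have ha0 : 0 ≤ putil v alloc j t := hpos j t htT.le
      have haE : putil v alloc j t ≤ E / ε := by
        rw [le_div_iff₀ hε0]; linarith [hcapb]
      have hg1 : v t j ≤ 1 := hv1' t htT j
      have hbb : putil v alloc j (t + 1) = putil v alloc j t + v t j := by
        rw [hstep j t, if_pos hal]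
      have hmin1 : min (putil v alloc j t) cap = putil v alloc j t :=
        min_eq_left (by rw [hcapdef]; linarith)
      have hmin2 : min (putil v alloc j (t + 1)) cap = putil v alloc j (t + 1) :=
        min_eq_left (by rw [hbb, hcapdef]; linarith)
      rw [hWdef]
      show ε * E / (E + 1) ≤
        pacePhi E (min (putil v alloc j (t + 1)) cap) - pacePhi E (min (putil v alloc j t) cap)
      rw [hmin1, hmin2, hbb]
      exact pacePhi_incr hE1 hε0 hε1 ha0 hvw hg1 (by linarith [hchain])
    have hsum1 : ((S j).card : ℝ) * (ε * E / (E + 1)) ≤ ∑ t ∈ S j, (W (t + 1) - W t) := by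
      have h := Finset.card_nsmul_le_sum (S j) (fun t => W (t + 1) - W t) (ε * E / (E + 1)) hkey
      simpa [nsmul_eq_mul] using h
    have hsum2 : ∑ t ∈ S j, (W (t + 1) - W t) ≤ ∑ t ∈ Finset.range T, (W (t + 1) - W t) := by
      apply Finset.sum_le_sum_of_subset_of_nonneg
      · rw [hSdef]; exact Finset.filter_subset _ _
      · intro t ht _
        exact sub_nonneg.2 (hWmono t (Finset.mem_range.1 ht))
    have hsum3 : ∑ t ∈ Finset.range T, (W (t + 1) - W t) = W T - W 0 := Finset.sum_range_sub W T
    have hW0 : W 0 = 0 := by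
      have h0 : putil v alloc j 0 = 0 := by simp [putil]
      have heq : W 0 = pacePhi E 0 := by
        rw [hWdef]
        simp only [h0, min_eq_left hcap0]
      rw [heq]
      exact pacePhi_zero hE0
    have hWT : W T ≤ E * K + ε := by
      have h1 : W T ≤ pacePhi E cap := by
        rw [hWdef]
        exact pacePhi_mono hE0 (min_le_right _ _)
      have h2 : pacePhi E cap = E + E * Real.log (cap / E) := pacePhi_of_ge hE0 hEcap
      have h3 : Real.log (cap / E) ≤ Real.log (1 / ε) + ε / E := by
        have hc1 : cap / E = (1 / ε) * (1 + ε / E) := by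
          rw [hcapdef]; field_simp
        rw [hc1, Real.log_mul (by positivity) (by positivity)]
        have h4 : Real.log (1 + ε / E) ≤ ε / E := by
          have h5 := Real.log_le_sub_one_of_pos (show (0:ℝ) < 1 + ε / E by positivity)
          linarith
        linarith
      have h6 : E * Real.log (cap / E) ≤ E * Real.log (1 / ε) + ε := by
        have hEe : E * (ε / E) = ε := by field_simp
        nlinarith [mul_le_mul_of_nonneg_left h3 hE0.le, hEe]
      have h7 : E * K + ε = E + E * Real.log (1 / ε) + ε := by rw [hKdef]; ring
      rw [h2] at h1
      rw [h7]
      linarith [h1, h6]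
    have hcomb : ((S j).card : ℝ) * (ε * E / (E + 1)) ≤ E * K + ε := by linarith
    have hcard0 : (0:ℝ) ≤ ((S j).card : ℝ) := Nat.cast_nonneg _
    have hE1' : (0:ℝ) < E + 1 := by linarith
    have hcomb' : ((S j).card : ℝ) * (ε * E) ≤ (E * K + ε) * (E + 1) := by
      have h := mul_le_mul_of_nonneg_right hcomb hE1'.le
      have hl : ((S j).card : ℝ) * (ε * E / (E + 1)) * (E + 1) = ((S j).card : ℝ) * (ε * E) := by
        field_simp
      rw [hl] at h
      linarith [h]
    have hstep1 : ε * ((S j).card : ℝ) ≤ (E * K + ε) * (E + 1) / E := by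
      rw [le_div_iff₀ hE0]
      nlinarith [hcomb']
    have hstep2 : (E * K + ε) * (E + 1) / E ≤ (E + 1) * K + 2 * ε := by
      rw [div_le_iff₀ hE0]
      nlinarith [hε0, hE1, hK1]
    linarith
  -- global counting
  obtain ⟨P, hPdef⟩ : ∃ P : Finset ℕ, P = (Finset.range T).filter (fun t => ε ≤ v t i) := ⟨_, rfl⟩
  have hPc : c * T ≤ (P.card : ℝ) := by
    have h1 : c * T ≤ ∑ t ∈ Finset.range T, v t i := hV i
    have h2 : ∑ t ∈ Finset.range T, v t i ≤
        ∑ t ∈ Finset.range T, (if ε ≤ v t i then (1:ℝ) else 0) := by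
      apply Finset.sum_le_sum
      intro t ht
      have htT := Finset.mem_range.1 ht
      rcases hv t htT i with h | h
      · rw [h]; split
        · norm_num
        · exact le_rfl
      · rw [if_pos h.1]; exact h.2
    have h3 : ∑ t ∈ Finset.range T, (if ε ≤ v t i then (1:ℝ) else 0) = (P.card : ℝ) := by
      rw [hPdef]
      exact Finset.sum_boole _ _
    linarith
  have hPwin : ε * ((P.filter (fun t => alloc t = i)).card : ℝ) ≤ UT := by
    have h1 : ε * ((P.filter (fun t => alloc t = i)).card : ℝ) =
        ∑ _t ∈ P.filter (fun t => alloc t = i), ε := by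
      rw [Finset.sum_const, nsmul_eq_mul]; ring
    have h2 : ∑ _t ∈ P.filter (fun t => alloc t = i), ε ≤
        ∑ t ∈ P.filter (fun t => alloc t = i), (if alloc t = i then v t i else 0) := by
      apply Finset.sum_le_sum
      intro t ht
      rw [hPdef] at ht
      simp only [Finset.mem_filter, Finset.mem_range] at ht
      obtain ⟨⟨htT, hvt⟩, hal⟩ := ht
      rw [if_pos hal]
      exact hvt
    have h3 : ∑ t ∈ P.filter (fun t => alloc t = i), (if alloc t = i then v t i else 0) ≤
        ∑ t ∈ Finset.range T, (if alloc t = i then v t i else 0) := by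
      apply Finset.sum_le_sum_of_subset_of_nonneg
      · intro t ht
        rw [hPdef] at ht
        simp only [Finset.mem_filter, Finset.mem_range] at ht
        exact Finset.mem_range.2 ht.1.1
      · intro t ht _
        split
        · exact hv0 t (Finset.mem_range.1 ht) i
        · exact le_rfl
    have h4 : ∑ t ∈ Finset.range T, (if alloc t = i then v t i else 0) = UT := by
      rw [hUTdef]; rfl
    linarith
  have hsplit : (P.card : ℝ) ≤ ((P.filter (fun t => alloc t = i)).card : ℝ) + 1 +
      ∑ j ∈ Finset.univ.erase i, ((S j).card : ℝ) := by
    have hpart : P.card = (P.filter (fun t => alloc t = i)).card +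
        (P.filter (fun t => ¬ alloc t = i)).card :=
      (Finset.card_filter_add_card_filter_not (p := fun t => alloc t = i)).symm
    have hsub : P.filter (fun t => ¬ alloc t = i) ⊆
        insert 0 ((Finset.univ.erase i).biUnion S) := by
      intro t ht
      rw [hPdef] at ht
      simp only [Finset.mem_filter, Finset.mem_range] at ht
      obtain ⟨⟨htT, hvt⟩, hne⟩ := ht
      rcases Nat.eq_zero_or_pos t with h0 | h1
      · exact Finset.mem_insert.2 (Or.inl h0)
      · refine Finset.mem_insert.2 (Or.inr (Finset.mem_biUnion.2 ⟨alloc t, ?_, ?_⟩))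
        · exact Finset.mem_erase.2 ⟨hne, Finset.mem_univ _⟩
        · rw [hSdef]
          exact Finset.mem_filter.2 ⟨Finset.mem_range.2 htT, h1, hvt, rfl⟩
    have hcard2 : (P.filter (fun t => ¬ alloc t = i)).card ≤
        1 + ∑ j ∈ Finset.univ.erase i, (S j).card := by
      calc (P.filter (fun t => ¬ alloc t = i)).card
          ≤ (insert 0 ((Finset.univ.erase i).biUnion S)).card := Finset.card_le_card hsub
        _ ≤ ((Finset.univ.erase i).biUnion S).card + 1 := Finset.card_insert_le _ _
        _ ≤ 1 + ∑ j ∈ Finset.univ.erase i, (S j).card := by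
            have := Finset.card_biUnion_le (s := Finset.univ.erase i) (t := S)
            omega
    have hNat : P.card ≤ (P.filter (fun t => alloc t = i)).card +
        (1 + ∑ j ∈ Finset.univ.erase i, (S j).card) := by omega
    have := (Nat.cast_le (α := ℝ)).2 hNat
    push_cast at this
    linarith
  have hsumS : ∑ j ∈ Finset.univ.erase i, (ε * ((S j).card : ℝ)) ≤ N1 * ((E + 1) * K + 2 * ε) := by
    have h1 : ∑ j ∈ Finset.univ.erase i, (ε * ((S j).card : ℝ)) ≤
        ∑ _j ∈ Finset.univ.erase i, ((E + 1) * K + 2 * ε) :=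
      Finset.sum_le_sum (fun j _ => hScard j)
    have hcarderase : ((Finset.univ.erase i).card : ℝ) = N1 := by
      rw [Finset.card_erase_of_mem (Finset.mem_univ i), Finset.card_univ, Fintype.card_fin,
        hN1def]
      push_cast [Nat.cast_sub hn]
      ring
    have h2 : ∑ _j ∈ Finset.univ.erase i, ((E + 1) * K + 2 * ε) =
        N1 * ((E + 1) * K + 2 * ε) := by
      rw [Finset.sum_const, nsmul_eq_mul, hcarderase]
    linarith
  -- combine
  have hmain : c * ε * T ≤ UT + N1 * K * E + C0 := by
    have hmul := mul_le_mul_of_nonneg_left hsplit hε0.le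
    have hdist : ε * (((P.filter (fun t => alloc t = i)).card : ℝ) + 1 +
        ∑ j ∈ Finset.univ.erase i, ((S j).card : ℝ)) =
        ε * ((P.filter (fun t => alloc t = i)).card : ℝ) + ε +
        ∑ j ∈ Finset.univ.erase i, (ε * ((S j).card : ℝ)) := by
      rw [← Finset.mul_sum]
      ring
    rw [hdist] at hmul
    have h2 : c * ε * T ≤ ε * (P.card : ℝ) := by
      have h := mul_le_mul_of_nonneg_left hPc hε0.le
      calc c * ε * T = ε * (c * T) := by ring
        _ ≤ ε * (P.card : ℝ) := h
    have hexp : N1 * ((E + 1) * K + 2 * ε) = N1 * K * E + (N1 * K + 2 * N1 * ε) := by ring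
    have hC : ε + (N1 * K + 2 * N1 * ε) ≤ C0 := by
      rw [hC0def, hN1def]
      nlinarith [hε1, hn1, hε0, hK1]
    rw [hexp] at hsumS
    linarith [hmul, h2, hPwin, hsumS, hC]
  -- final case analysis
  have hfinal : c * ε / D * T - C0 ≤ UT := by
    rcases le_total (ℓ * T) (putil v alloc i T) with hcase | hcase
    · have hEeq : E = UT := by
        rw [hEdef]
        exact max_eq_right (by rw [hUTdef]; exact hcase)
      rw [hEeq] at hmain
      have hUD : UT * D = UT + N1 * K * UT := by rw [hDdef]; ring
      have h1 : c * ε * T ≤ UT * D + C0 := by linarith [hmain, hUD]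
      have h2 : c * ε * T ≤ (UT + C0) * D := by nlinarith [hC00, hD1, h1]
      have h3 : c * ε / D * T ≤ UT + C0 := by
        rw [div_mul_eq_mul_div, div_le_iff₀ hD0]
        linarith [h2]
      linarith
    · have hEeq : E = ℓ * T := by
        rw [hEdef]
        exact max_eq_left (by rw [hUTdef]; exact hcase)
      rw [hEeq] at hmain
      have hℓd : ℓ ≤ c * ε / D := by
        have h : c * ε ^ 2 / D ≤ c * ε / D := by
          rw [div_le_div_iff₀ hD0 hD0]
          have hkey := mul_nonneg (mul_nonneg (mul_nonneg hc0.le hε0.le) hD0.le)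
            (sub_nonneg.2 hε1)
          nlinarith [hkey]
        linarith [hℓub']
      have hNK0 : 0 ≤ N1 * K := mul_nonneg hN10 (by linarith)
      have hkey : N1 * K * ℓ ≤ c * ε - c * ε / D := by
        have h1 : N1 * K * ℓ ≤ N1 * K * (c * ε / D) :=
          mul_le_mul_of_nonneg_left hℓd hNK0
        have h2 : N1 * K * (c * ε / D) = c * ε - c * ε / D := by
          rw [hDdef]
          field_simp
          ring
        linarith [h1, h2]
      have hT0 : (0:ℝ) ≤ T := Nat.cast_nonneg T
      have h3 : N1 * K * ℓ * T ≤ (c * ε - c * ε / D) * T :=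
        mul_le_mul_of_nonneg_right hkey hT0
      have h4 : N1 * K * (ℓ * T) = N1 * K * ℓ * T := by ring
      rw [h4] at hmain
      have h5 : (c * ε - c * ε / D) * T = c * ε * T - c * ε / D * T := by ring
      linarith [hmain, h3, h5]
  have hring : (c * ε / D - η) * T = c * ε / D * T - η * T := by ring
  rw [hUTdef] at hfinal
  rw [hring]
  linarith [hfinal, hTC]
end

section
/- Under the assumptions that each agent's values lie in {0} ∪ [ε,1], that V_i ≥ cT for all i ∈ [n] (c ∈ (0,1]), and that PACE is run with r = 1 and ℓ < c·ε^2/(1 + ε + (n−1)(1 + log(1/ε))), the asymptotic competitive ratio for Nash welfare satisfies: limsup_{T→∞} (prod_{i=1}^n U_i^*/U_i(A_i))^{1/n} ≤ (1 + 2·log(1/ε))/c, where U_i^* are the utilities under any offline Nash-welfare-maximizing fractional allocation. -/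
namespace PaceProof

lemma telescope (f : ℕ → ℝ) {S : Finset ℕ} {a b : ℕ} (hab : a ≤ b)
    (hS : ∀ t ∈ S, a ≤ t ∧ t < b) (hmono : ∀ t, a ≤ t → t < b → f t ≤ f (t + 1)) :
    ∑ t ∈ S, (f (t + 1) - f t) ≤ f b - f a := by
  have hsub : S ⊆ Finset.Ico a b := fun t ht => Finset.mem_Ico.2 (hS t ht)
  have h1 : ∑ t ∈ S, (f (t + 1) - f t) ≤ ∑ t ∈ Finset.Ico a b, (f (t + 1) - f t) :=
    Finset.sum_le_sum_of_subset_of_nonneg hsub (fun t ht _ => by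
      have h := Finset.mem_Ico.1 ht
      exact sub_nonneg.2 (hmono t h.1 h.2))
  have h2 : ∑ t ∈ Finset.Ico a b, (f (t + 1) - f t) = f b - f a := by
    rw [Finset.sum_Ico_eq_sum_range]
    calc ∑ k ∈ Finset.range (b - a), (f (a + k + 1) - f (a + k))
        = f (a + (b - a)) - f (a + 0) := by
          have h4 := Finset.sum_range_sub (fun k => f (a + k)) (b - a)
          simp only [← Nat.add_assoc] at h4
          exact h4
      _ = f b - f a := by rw [Nat.add_sub_cancel' hab, Nat.add_zero]
  linarith

lemma div_le_log {a d : ℝ} (ha : 0 < a) (hd : 0 ≤ d) :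
    d / a ≤ Real.log (a + d) - Real.log a + (d / a) ^ 2 := by
  have had : 0 < a + d := by linarith
  have h1 : Real.log (a / (a + d)) ≤ a / (a + d) - 1 :=
    Real.log_le_sub_one_of_pos (by positivity)
  rw [Real.log_div ha.ne' had.ne'] at h1
  have h2 : Real.log (a + d) - Real.log a ≥ 1 - a / (a + d) := by linarith
  have h3 : 1 - a / (a + d) = d / (a + d) := by field_simp; ring
  have h4 : d / a - d / (a + d) ≤ (d / a) ^ 2 := by
    rw [div_sub_div _ _ ha.ne' had.ne', div_pow]
    apply div_le_div₀ (by positivity) _ (by positivity) _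
    · nlinarith
    · nlinarith
  linarith

lemma putil_succ {n : ℕ} (v : ℕ → Fin n → ℝ) (alloc : ℕ → Fin n) (i : Fin n) (t : ℕ) :
    putil v alloc i (t + 1) = putil v alloc i t + (if alloc t = i then v t i else 0) :=
  Finset.sum_range_succ _ _

variable {n : ℕ} {v : ℕ → Fin n → ℝ} {alloc : ℕ → Fin n} {T : ℕ} {ℓ : ℝ}

lemma putil_nonneg (h01 : ∀ s < T, ∀ k, 0 ≤ v s k ∧ v s k ≤ 1) (i : Fin n)
    {t : ℕ} (ht : t ≤ T) : 0 ≤ putil v alloc i t := by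
  apply Finset.sum_nonneg
  intro s hs
  have hsT : s < T := lt_of_lt_of_le (Finset.mem_range.1 hs) ht
  split
  · exact (h01 s hsT i).1
  · exact le_refl 0

lemma putil_mono (h01 : ∀ s < T, ∀ k, 0 ≤ v s k ∧ v s k ≤ 1) (i : Fin n)
    {s t : ℕ} (hst : s ≤ t) (ht : t ≤ T) : putil v alloc i s ≤ putil v alloc i t := by
  apply Finset.sum_le_sum_of_subset_of_nonneg (Finset.range_subset_range.2 hst)
  intro u hu _
  have huT : u < T := lt_of_lt_of_le (Finset.mem_range.1 hu) ht
  split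
  · exact (h01 u huT i).1
  · exact le_refl 0

lemma putil_le (h01 : ∀ s < T, ∀ k, 0 ≤ v s k ∧ v s k ≤ 1) (i : Fin n)
    {t : ℕ} (ht : t ≤ T) : putil v alloc i t ≤ (t : ℝ) := by
  calc putil v alloc i t ≤ ∑ s ∈ Finset.range t, (1 : ℝ) := by
        apply Finset.sum_le_sum
        intro s hs
        have hsT : s < T := lt_of_lt_of_le (Finset.mem_range.1 hs) ht
        split
        · exact (h01 s hsT i).2
        · exact zero_le_one
    _ = t := by simp

lemma hatU_eq (h01 : ∀ s < T, ∀ k, 0 ≤ v s k ∧ v s k ≤ 1) (hℓ0 : 0 ≤ ℓ) (hℓ1 : ℓ ≤ 1)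
    (i : Fin n) {t : ℕ} (ht0 : t ≠ 0) (ht : t ≤ T) :
    hatU ℓ v alloc i t = max (ℓ * t) (putil v alloc i t) := by
  unfold hatU
  rw [if_neg ht0, min_eq_right]
  apply max_le
  · nlinarith [Nat.cast_nonneg (α := ℝ) t]
  · exact putil_le h01 i ht

lemma hatU_pos (h01 : ∀ s < T, ∀ k, 0 ≤ v s k ∧ v s k ≤ 1) (hℓ0 : 0 < ℓ) (hℓ1 : ℓ ≤ 1)
    (i : Fin n) {t : ℕ} (ht : t ≤ T) : 0 < hatU ℓ v alloc i t := by
  rcases Nat.eq_zero_or_pos t with rfl | ht1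
  · simp [hatU]
  · rw [hatU_eq h01 hℓ0.le hℓ1 i ht1.ne' ht]
    have : (0:ℝ) < ℓ * t := by
      have : (0:ℝ) < (t:ℝ) := by exact_mod_cast ht1
      positivity
    exact lt_of_lt_of_le this (le_max_left _ _)

lemma hatU_le_max (h01 : ∀ s < T, ∀ k, 0 ≤ v s k ∧ v s k ≤ 1) (hℓ0 : 0 < ℓ) (hℓ1 : ℓ ≤ 1)
    (hBT : 1 ≤ ℓ * T) (i : Fin n) {t : ℕ} (ht : t ≤ T) :
    hatU ℓ v alloc i t ≤ max (ℓ * T) (putil v alloc i T) := by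
  rcases Nat.eq_zero_or_pos t with rfl | ht1
  · simp only [hatU, if_pos rfl]
    exact le_trans hBT (le_max_left _ _)
  · rw [hatU_eq h01 hℓ0.le hℓ1 i ht1.ne' ht]
    apply max_le_max
    · have : (t:ℝ) ≤ (T:ℝ) := by exact_mod_cast ht
      nlinarith
    · exact putil_mono h01 i ht le_rfl

set_option maxHeartbeats 1000000 in
/-- Main envy-type lemma. -/
lemma envy (ε : ℝ) (hε0 : 0 < ε) (hε1 : ε ≤ 1) (hℓ0 : 0 < ℓ) (hℓ1 : ℓ ≤ 1)
    (hval : ∀ t < T, ∀ i, v t i = 0 ∨ v t i ∈ Set.Icc ε 1)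
    (hspec : PaceSpec ℓ T v alloc) (hBT : 1 ≤ ℓ * T) (i j : Fin n) :
    (∑ t ∈ Finset.range T, if alloc t = j then v t i else 0) ≤
      (1 + 2 * Real.log (1 / ε)) * max (ℓ * T) (putil v alloc i T)
        + (1 / ε + 1 / ε ^ 2 + 1 / ε ^ 3 + 1) := by
  have h01 : ∀ s < T, ∀ k, 0 ≤ v s k ∧ v s k ≤ 1 := by
    intro s hs k
    rcases hval s hs k with h | h
    · rw [h]; exact ⟨le_refl 0, zero_le_one⟩
    · exact ⟨le_trans hε0.le h.1, h.2⟩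
  set L := Real.log (1 / ε) with hLdef
  set B := max (ℓ * T) (putil v alloc i T) with hBdef
  have hL0 : 0 ≤ L := Real.log_nonneg (by rw [le_div_iff₀ hε0]; linarith)
  have hB1 : (1:ℝ) ≤ B := le_trans hBT (le_max_left _ _)
  have hB0 : (0:ℝ) < B := lt_of_lt_of_le one_pos hB1
  set Uj : ℕ → ℝ := putil v alloc j with hUjdef
  set F : Finset ℕ := (Finset.range T).filter (fun t => alloc t = j ∧ ε ≤ v t i) with hFdef
  -- memberships
  have hmemF : ∀ t ∈ F, t < T ∧ alloc t = j ∧ ε ≤ v t i := by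
    intro t ht
    have := Finset.mem_filter.1 ht
    exact ⟨Finset.mem_range.1 this.1, this.2.1, this.2.2⟩
  -- Step A
  have hstepA : (∑ t ∈ Finset.range T, if alloc t = j then v t i else 0) ≤ ∑ t ∈ F, v t i := by
    rw [hFdef, Finset.sum_filter]
    apply Finset.sum_le_sum
    intro t ht
    have htT := Finset.mem_range.1 ht
    by_cases h1 : alloc t = j
    · by_cases h2 : ε ≤ v t i
      · simp [h1, h2]
      · rcases hval t htT i with h3 | h3
        · simp [h1, h2, h3]
        · exact absurd h3.1 h2
    · simp [h1]
  -- key inequality from the PACE spec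
  have hkey : ∀ t ∈ F, v t i * hatU ℓ v alloc j t ≤ v t j * hatU ℓ v alloc i t := by
    intro t ht
    obtain ⟨htT, hj, _⟩ := hmemF t ht
    have h := hspec t htT i
    rw [hj] at h
    rcases h with h | h
    · exact h.le
    · exact h.1.ge
  have hvj : ∀ t ∈ F, ε ≤ v t j ∧ v t j ≤ 1 := by
    intro t ht
    obtain ⟨htT, hj, hvi⟩ := hmemF t ht
    rcases hval t htT j with h0 | h0
    · exfalso
      have h1 := hkey t ht
      rw [h0] at h1
      have h2 : 0 < hatU ℓ v alloc j t := hatU_pos h01 hℓ0 hℓ1 j htT.le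
      nlinarith
    · exact ⟨h0.1, h0.2⟩
  have hUj_nonneg : ∀ t ≤ T, 0 ≤ Uj t := fun t ht => putil_nonneg h01 j ht
  have hUj_succF : ∀ t ∈ F, Uj (t + 1) = Uj t + v t j := by
    intro t ht
    obtain ⟨_, hj, _⟩ := hmemF t ht
    rw [hUjdef, putil_succ, if_pos hj]
  have hUj_inc : ∀ t < T, Uj t ≤ Uj (t + 1) := by
    intro t htT
    rw [hUjdef, putil_succ]
    have : (0:ℝ) ≤ (if alloc t = j then v t j else 0) := by
      split
      · exact (h01 t htT j).1
      · exact le_refl 0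
    linarith
  have hUjB : ∀ t ∈ F, Uj t ≤ B / ε := by
    intro t ht
    obtain ⟨htT, hj, hvi⟩ := hmemF t ht
    rcases Nat.eq_zero_or_pos t with rfl | ht1
    · have : Uj 0 = 0 := by simp [hUjdef, putil]
      rw [this]; positivity
    · have h1 : Uj t ≤ hatU ℓ v alloc j t := by
        rw [hatU_eq h01 hℓ0.le hℓ1 j ht1.ne' htT.le]
        exact le_max_right _ _
      have h2 : ε * hatU ℓ v alloc j t ≤ v t j * hatU ℓ v alloc i t := by
        calc ε * hatU ℓ v alloc j t ≤ v t i * hatU ℓ v alloc j t :=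
              mul_le_mul_of_nonneg_right hvi (hatU_pos h01 hℓ0 hℓ1 j htT.le).le
          _ ≤ v t j * hatU ℓ v alloc i t := hkey t ht
      have h3 : v t j * hatU ℓ v alloc i t ≤ 1 * B :=
        mul_le_mul (hvj t ht).2 (hatU_le_max h01 hℓ0 hℓ1 hBT i htT.le)
          (hatU_pos h01 hℓ0 hℓ1 i htT.le).le zero_le_one
    -- ε * Uj t ≤ B
      rw [le_div_iff₀ hε0]
      have h4 : 0 < hatU ℓ v alloc j t := hatU_pos h01 hℓ0 hℓ1 j htT.le
      nlinarith
  have hkey2 : ∀ t ∈ F, v t i * Uj t ≤ v t j * B := by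
    intro t ht
    obtain ⟨htT, hj, hvi⟩ := hmemF t ht
    rcases Nat.eq_zero_or_pos t with rfl | ht1
    · have h0 : Uj 0 = 0 := by simp [hUjdef, putil]
      rw [h0, mul_zero]
      have h2 : 0 ≤ v 0 j := le_trans hε0.le (hvj 0 ht).1
      exact mul_nonneg h2 hB0.le
    · have h1 : Uj t ≤ hatU ℓ v alloc j t := by
        rw [hatU_eq h01 hℓ0.le hℓ1 j ht1.ne' htT.le]
        exact le_max_right _ _
      have h2 : 0 ≤ v t i := (h01 t htT i).1
      calc v t i * Uj t ≤ v t i * hatU ℓ v alloc j t := mul_le_mul_of_nonneg_left h1 h2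
        _ ≤ v t j * hatU ℓ v alloc i t := hkey t ht
        _ ≤ v t j * B := mul_le_mul_of_nonneg_left
              (hatU_le_max h01 hℓ0 hℓ1 hBT i htT.le) (le_trans hε0.le (hvj t ht).1)
  -- split F
  set Flow : Finset ℕ := F.filter (fun t => Uj t < ε * B) with hFlowdef
  set Fhigh : Finset ℕ := F.filter (fun t => ¬ Uj t < ε * B) with hFhighdef
  have hsplit : ∑ t ∈ F, v t i = (∑ t ∈ Flow, v t i) + ∑ t ∈ Fhigh, v t i :=
    (Finset.sum_filter_add_sum_filter_not F _ _).symm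
  -- LOW part
  have hlow1 : ∑ t ∈ Flow, v t i ≤ (1 / ε) * ∑ t ∈ Flow, (Uj (t + 1) - Uj t) := by
    rw [Finset.mul_sum]
    apply Finset.sum_le_sum
    intro t ht
    have htF : t ∈ F := (Finset.mem_filter.1 ht).1
    obtain ⟨htT, hj, hvi⟩ := hmemF t htF
    rw [hUj_succF t htF]
    have h1 : v t i ≤ 1 := (h01 t htT i).2
    have h2 : ε ≤ v t j := (hvj t htF).1
    have h3 : Uj t + v t j - Uj t = v t j := by ring
    rw [h3]
    calc v t i ≤ 1 := h1
      _ = (1 / ε) * ε := by field_simp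
      _ ≤ (1 / ε) * v t j := mul_le_mul_of_nonneg_left h2 (by positivity)
  have hlowtel : ∑ t ∈ Flow, (Uj (t + 1) - Uj t) ≤ ε * B + 1 := by
    rcases Flow.eq_empty_or_nonempty with he | hne
    · rw [he, Finset.sum_empty]; positivity
    · set tm := Flow.max' hne with htmdef
      have htmF : tm ∈ Flow := Flow.max'_mem hne
      have htmFF : tm ∈ F := (Finset.mem_filter.1 htmF).1
      have htmlow : Uj tm < ε * B := (Finset.mem_filter.1 htmF).2
      obtain ⟨htmT, _, _⟩ := hmemF tm htmFF
      have htel := telescope Uj (a := 0) (b := tm + 1) (Nat.zero_le _)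
        (fun t ht => ⟨Nat.zero_le _, Nat.lt_succ_of_le (Flow.le_max' t ht)⟩)
        (fun t _ htb => hUj_inc t (lt_of_le_of_lt (Nat.lt_succ_iff.1 htb) htmT))
      have hUj0 : Uj 0 = 0 := by simp [hUjdef, putil]
      have hsucc : Uj (tm + 1) = Uj tm + v tm j := hUj_succF tm htmFF
      have hv1 : v tm j ≤ 1 := (hvj tm htmFF).2
      rw [hUj0, hsucc] at htel
      linarith
  -- HIGH part
  have hhigh1 : ∀ t ∈ Fhigh, v t i ≤
      B * (Real.log (Uj (t + 1)) - Real.log (Uj t))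
        + (1 / (ε * B)) ^ 2 * B * (Uj (t + 1) - Uj t) := by
    intro t ht
    have htF : t ∈ F := (Finset.mem_filter.1 ht).1
    have hge : ε * B ≤ Uj t := not_lt.1 (Finset.mem_filter.1 ht).2
    obtain ⟨htT, hj, hvi⟩ := hmemF t htF
    have ha : 0 < Uj t := lt_of_lt_of_le (by positivity) hge
    have hd0 : 0 ≤ v t j := le_trans hε0.le (hvj t htF).1
    have hd1 : v t j ≤ 1 := (hvj t htF).2
    have hsucc : Uj (t + 1) = Uj t + v t j := hUj_succF t htF
    have hdiv : v t i ≤ B * (v t j / Uj t) := by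
      have h1 : v t i * Uj t ≤ v t j * B := hkey2 t htF
      rw [mul_div_assoc'] at *
      rw [le_div_iff₀ ha]
      nlinarith
    have hlog : v t j / Uj t ≤ (Real.log (Uj (t + 1)) - Real.log (Uj t)) + (v t j / Uj t) ^ 2 := by
      rw [hsucc]
      exact div_le_log ha hd0
    have hsq : (v t j / Uj t) ^ 2 ≤ (1 / (ε * B)) ^ 2 * v t j := by
      rw [div_pow]
      have h1 : (v t j) ^ 2 ≤ v t j := by nlinarith
      have h2 : (ε * B) ^ 2 ≤ (Uj t) ^ 2 := pow_le_pow_left₀ (by positivity) hge 2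
      calc (v t j) ^ 2 / (Uj t) ^ 2 ≤ v t j / (ε * B) ^ 2 :=
            div_le_div₀ hd0 h1 (by positivity) h2
        _ = (1 / (ε * B)) ^ 2 * v t j := by field_simp
    have hB0' : (0:ℝ) ≤ B := hB0.le
    have hstep : v t j / Uj t ≤ (Real.log (Uj (t + 1)) - Real.log (Uj t))
        + (1 / (ε * B)) ^ 2 * v t j := le_trans hlog (by linarith)
    calc v t i ≤ B * (v t j / Uj t) := hdiv
      _ ≤ B * ((Real.log (Uj (t + 1)) - Real.log (Uj t)) + (1 / (ε * B)) ^ 2 * v t j) :=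
          mul_le_mul_of_nonneg_left hstep hB0'
      _ = B * (Real.log (Uj (t + 1)) - Real.log (Uj t))
            + (1 / (ε * B)) ^ 2 * B * (Uj (t + 1) - Uj t) := by rw [hsucc]; ring
  have hhightel1 : ∑ t ∈ Fhigh, (Real.log (Uj (t + 1)) - Real.log (Uj t)) ≤
      Real.log (B / ε + 1) - Real.log (ε * B) := by
    have hεB1 : ε * B ≤ B / ε + 1 := by
      have h1 : ε * B ≤ B := by nlinarith
      have h2 : B ≤ B / ε := by rw [le_div_iff₀ hε0]; nlinarith
      linarith
    rcases Fhigh.eq_empty_or_nonempty with he | hne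
    · rw [he, Finset.sum_empty]
      have := Real.log_le_log (by positivity : (0:ℝ) < ε * B) hεB1
      linarith
    · set tm := Fhigh.max' hne with htmdef
      set t0 := Fhigh.min' hne with ht0def
      have htmF : tm ∈ Fhigh := Fhigh.max'_mem hne
      have ht0F : t0 ∈ Fhigh := Fhigh.min'_mem hne
      have htmFF : tm ∈ F := (Finset.mem_filter.1 htmF).1
      have ht0FF : t0 ∈ F := (Finset.mem_filter.1 ht0F).1
      obtain ⟨htmT, _, _⟩ := hmemF tm htmFF
      obtain ⟨ht0T, _, _⟩ := hmemF t0 ht0FF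
      have ht0ge : ε * B ≤ Uj t0 := not_lt.1 (Finset.mem_filter.1 ht0F).2
      have hmono : ∀ t, t0 ≤ t → t < tm + 1 →
          Real.log (Uj t) ≤ Real.log (Uj (t + 1)) := by
        intro t h1 h2
        have htT : t < T := lt_of_le_of_lt (Nat.lt_succ_iff.1 h2) htmT
        have hpos : 0 < Uj t :=
          lt_of_lt_of_le (lt_of_lt_of_le (by positivity) ht0ge)
            (putil_mono h01 j h1 htT.le)
        exact Real.log_le_log hpos (hUj_inc t htT)
      have htel := telescope (fun t => Real.log (Uj t)) (a := t0) (b := tm + 1)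
        (Nat.le_succ_of_le (Fhigh.min'_le _ (Fhigh.max'_mem hne)))
        (fun t ht => ⟨Fhigh.min'_le t ht, Nat.lt_succ_of_le (Fhigh.le_max' t ht)⟩)
        hmono
      have h5 : Uj (tm + 1) ≤ B / ε + 1 := by
        have := hUjB tm htmFF
        have hsucc := hUj_succF tm htmFF
        have := (hvj tm htmFF).2
        rw [hsucc]; linarith [hUjB tm htmFF]
      have hpos0 : 0 < Uj t0 := lt_of_lt_of_le (by positivity) ht0ge
      have hpossucc : 0 < Uj (tm + 1) := by
        have h6 : Uj tm ≤ Uj (tm + 1) := hUj_inc tm htmT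
        have h7 : ε * B ≤ Uj tm := not_lt.1 (Finset.mem_filter.1 htmF).2
        have : (0:ℝ) < ε * B := by positivity
        linarith
      have h8 : Real.log (Uj (tm + 1)) ≤ Real.log (B / ε + 1) :=
        Real.log_le_log hpossucc h5
      have h9 : Real.log (ε * B) ≤ Real.log (Uj t0) :=
        Real.log_le_log (by positivity) ht0ge
      calc ∑ t ∈ Fhigh, (Real.log (Uj (t + 1)) - Real.log (Uj t))
          ≤ Real.log (Uj (tm + 1)) - Real.log (Uj t0) := htel
        _ ≤ Real.log (B / ε + 1) - Real.log (ε * B) := by linarith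
  have hhightel2 : ∑ t ∈ Fhigh, (Uj (t + 1) - Uj t) ≤ B / ε + 1 := by
    rcases Fhigh.eq_empty_or_nonempty with he | hne
    · rw [he, Finset.sum_empty]; positivity
    · set tm := Fhigh.max' hne with htmdef
      have htmF : tm ∈ Fhigh := Fhigh.max'_mem hne
      have htmFF : tm ∈ F := (Finset.mem_filter.1 htmF).1
      obtain ⟨htmT, _, _⟩ := hmemF tm htmFF
      have htel := telescope Uj (a := 0) (b := tm + 1) (Nat.zero_le _)
        (fun t ht => ⟨Nat.zero_le _, Nat.lt_succ_of_le (Fhigh.le_max' t ht)⟩)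
        (fun t _ htb => hUj_inc t (lt_of_le_of_lt (Nat.lt_succ_iff.1 htb) htmT))
      have hUj0 : Uj 0 = 0 := by simp [hUjdef, putil]
      have hsucc : Uj (tm + 1) = Uj tm + v tm j := hUj_succF tm htmFF
      have hv1 : v tm j ≤ 1 := (hvj tm htmFF).2
      have hBound := hUjB tm htmFF
      rw [hUj0, hsucc] at htel
      linarith
  -- log estimate
  have hlogest : B * (Real.log (B / ε + 1) - Real.log (ε * B)) ≤ 2 * L * B + ε := by
    have hx : (0:ℝ) < B / ε + 1 := by positivity
    have hy : (0:ℝ) < ε * B := by positivity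
    have h1 : Real.log (B / ε + 1) - Real.log (ε * B) = Real.log ((B / ε + 1) / (ε * B)) :=
      (Real.log_div hx.ne' hy.ne').symm
    have h2 : (B / ε + 1) / (ε * B) = 1 / ε ^ 2 + 1 / (ε * B) := by
      field_simp
    have h3 : Real.log (1 / ε ^ 2 + 1 / (ε * B)) ≤ Real.log (1 / ε ^ 2) + ε / B := by
      have hz : (0:ℝ) < 1 / ε ^ 2 := by positivity
      have hw : (0:ℝ) < 1 / ε ^ 2 + 1 / (ε * B) := by positivity
      have h4 : Real.log ((1 / ε ^ 2 + 1 / (ε * B)) / (1 / ε ^ 2)) ≤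
          (1 / ε ^ 2 + 1 / (ε * B)) / (1 / ε ^ 2) - 1 :=
        Real.log_le_sub_one_of_pos (by positivity)
      rw [Real.log_div hw.ne' hz.ne'] at h4
      have h5 : (1 / ε ^ 2 + 1 / (ε * B)) / (1 / ε ^ 2) - 1 = ε / B := by
        field_simp
        ring
      rw [h5] at h4
      linarith
    have h6 : Real.log (1 / ε ^ 2) = 2 * L := by
      have he : (1:ℝ) / ε ^ 2 = (1 / ε) ^ 2 := by
        field_simp
      rw [he, hLdef, Real.log_pow]
      push_cast
      ring
    rw [h1, h2]
    have h7 : Real.log (1 / ε ^ 2 + 1 / (ε * B)) ≤ 2 * L + ε / B := by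
      rw [h6] at h3; linarith
    have h8 : B * Real.log (1 / ε ^ 2 + 1 / (ε * B)) ≤ B * (2 * L + ε / B) :=
      mul_le_mul_of_nonneg_left h7 hB0.le
    have h9 : B * (2 * L + ε / B) = 2 * L * B + ε := by field_simp
    linarith
  -- quadratic estimate
  have hsqest : (1 / (ε * B)) ^ 2 * B * (B / ε + 1) ≤ 1 / ε ^ 3 + 1 / ε ^ 2 := by
    have h1 : (1 / (ε * B)) ^ 2 * B * (B / ε + 1) = 1 / ε ^ 3 + 1 / (ε ^ 2 * B) := by
      field_simp
    rw [h1]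
    have h2 : 1 / (ε ^ 2 * B) ≤ 1 / ε ^ 2 := by
      apply one_div_le_one_div_of_le (by positivity)
      nlinarith [pow_pos hε0 2]
    linarith
  -- combine high part
  have hhighsum : ∑ t ∈ Fhigh, v t i ≤ 2 * L * B + ε + (1 / ε ^ 3 + 1 / ε ^ 2) := by
    calc ∑ t ∈ Fhigh, v t i
        ≤ ∑ t ∈ Fhigh, (B * (Real.log (Uj (t + 1)) - Real.log (Uj t))
            + (1 / (ε * B)) ^ 2 * B * (Uj (t + 1) - Uj t)) := Finset.sum_le_sum hhigh1
      _ = B * (∑ t ∈ Fhigh, (Real.log (Uj (t + 1)) - Real.log (Uj t)))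
            + (1 / (ε * B)) ^ 2 * B * (∑ t ∈ Fhigh, (Uj (t + 1) - Uj t)) := by
          rw [Finset.sum_add_distrib, Finset.mul_sum, Finset.mul_sum]
      _ ≤ B * (Real.log (B / ε + 1) - Real.log (ε * B))
            + (1 / (ε * B)) ^ 2 * B * (B / ε + 1) := by
          apply add_le_add
          · exact mul_le_mul_of_nonneg_left hhightel1 hB0.le
          · exact mul_le_mul_of_nonneg_left hhightel2 (by positivity)
      _ ≤ 2 * L * B + ε + (1 / ε ^ 3 + 1 / ε ^ 2) := by linarith
  -- combine low part
  have hlowsum : ∑ t ∈ Flow, v t i ≤ B + 1 / ε := by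
    have h1 : (1 / ε) * (ε * B + 1) = B + 1 / ε := by field_simp
    calc ∑ t ∈ Flow, v t i ≤ (1 / ε) * ∑ t ∈ Flow, (Uj (t + 1) - Uj t) := hlow1
      _ ≤ (1 / ε) * (ε * B + 1) := mul_le_mul_of_nonneg_left hlowtel (by positivity)
      _ = B + 1 / ε := h1
  -- total
  calc (∑ t ∈ Finset.range T, if alloc t = j then v t i else 0)
      ≤ ∑ t ∈ F, v t i := hstepA
    _ = (∑ t ∈ Flow, v t i) + ∑ t ∈ Fhigh, v t i := hsplit
    _ ≤ (B + 1 / ε) + (2 * L * B + ε + (1 / ε ^ 3 + 1 / ε ^ 2)) := by linarith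
    _ ≤ (1 + 2 * L) * B + (1 / ε + 1 / ε ^ 2 + 1 / ε ^ 3 + 1) := by nlinarith

lemma amgm_final (n : ℕ) (hn : 0 < n) (Ust U : Fin n → ℝ) (m Tr : ℝ)
    (hm0 : 0 < m) (hU : ∀ i, m ≤ U i) (hUst0 : ∀ i, 0 ≤ Ust i)
    (hsum : ∑ i, Ust i ≤ Tr) :
    (∏ i, Ust i / U i) ^ ((1:ℝ)/(n:ℝ)) ≤ Tr / ((n:ℝ) * m) := by
  have hn0 : (0:ℝ) < (n:ℝ) := by exact_mod_cast hn
  have hU0 : ∀ i, 0 < U i := fun i => lt_of_lt_of_le hm0 (hU i)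
  have hratio0 : ∀ i, 0 ≤ Ust i / U i := fun i => div_nonneg (hUst0 i) (hU0 i).le
  have hAM : (∏ i, Ust i / U i) ^ ((1:ℝ)/(n:ℝ)) ≤ ∑ i, (1/(n:ℝ)) * (Ust i / U i) := by
    rw [← Real.finset_prod_rpow Finset.univ _ (fun i _ => hratio0 i) ((1:ℝ)/(n:ℝ))]
    exact Real.geom_mean_le_arith_mean_weighted Finset.univ _ _
      (fun i _ => by positivity)
      (by rw [Finset.sum_const, Finset.card_univ, Fintype.card_fin, nsmul_eq_mul]
          field_simp)
      (fun i _ => hratio0 i)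
  have hsum3 : ∑ i, (1/(n:ℝ)) * (Ust i / U i) ≤ Tr / ((n:ℝ) * m) := by
    calc ∑ i, (1/(n:ℝ)) * (Ust i / U i)
        ≤ ∑ i, (1/(n:ℝ)) * (Ust i / m) := by
          apply Finset.sum_le_sum
          intro i _
          apply mul_le_mul_of_nonneg_left _ (by positivity)
          have h := one_div_le_one_div_of_le hm0 (hU i)
          calc Ust i / U i = Ust i * (1 / U i) := by ring
            _ ≤ Ust i * (1 / m) := mul_le_mul_of_nonneg_left h (hUst0 i)
            _ = Ust i / m := by ring
      _ = (∑ i, Ust i) / ((n:ℝ) * m) := by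
          rw [Finset.sum_div]
          apply Finset.sum_congr rfl
          intro i _
          field_simp
      _ ≤ Tr / ((n:ℝ) * m) := div_le_div_of_nonneg_right hsum (by positivity)
  exact le_trans hAM hsum3

end PaceProof

set_option maxHeartbeats 1000000 in
/-- Asymptotic competitive ratio of PACE for Nash welfare: with values in `{0} ∪ [ε,1]`,
`V_i ≥ cT`, `r = 1` and `ℓ < cε²/(1+ε+(n-1)(1+log(1/ε)))`, the geometric-mean ratio of
any offline Nash-welfare-maximizing fractional allocation to PACE's utilities is
asymptotically at most `(1 + 2 log(1/ε))/c`. -/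
theorem pace_nash_competitive_ratio (n : ℕ) (hn : 0 < n) (ε c ℓ : ℝ)
    (hε : ε ∈ Set.Ioc (0:ℝ) 1) (hc : c ∈ Set.Ioc (0:ℝ) 1) (hℓ : 0 < ℓ)
    (hℓub : ℓ < c * ε ^ 2 / (1 + ε + ((n : ℝ) - 1) * (1 + Real.log (1 / ε)))) :
    ∀ η > (0:ℝ), ∃ T₀ : ℕ, ∀ T ≥ T₀,
      ∀ (v : ℕ → Fin n → ℝ) (alloc : ℕ → Fin n) (xstar : ℕ → Fin n → ℝ),
        (∀ t < T, ∀ i, v t i = 0 ∨ v t i ∈ Set.Icc ε 1) →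
        (∀ i, c * T ≤ ∑ t ∈ Finset.range T, v t i) →
        PaceSpec ℓ T v alloc →
        (∀ t i, 0 ≤ xstar t i) → (∀ t, ∑ i, xstar t i ≤ 1) →
        (∀ y : ℕ → Fin n → ℝ, (∀ t i, 0 ≤ y t i) → (∀ t, ∑ i, y t i ≤ 1) →
          ∏ i, ∑ t ∈ Finset.range T, y t i * v t i ≤
            ∏ i, ∑ t ∈ Finset.range T, xstar t i * v t i) →
        (∏ i, (∑ t ∈ Finset.range T, xstar t i * v t i) / putil v alloc i T)
            ^ ((1:ℝ)/(n:ℝ))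
          ≤ (1 + 2 * Real.log (1 / ε)) / c + η := by
  intro η hη
  obtain ⟨hε0, hε1⟩ := hε
  obtain ⟨hc0, hc1⟩ := hc
  set L := Real.log (1/ε) with hLdef
  have hL0 : 0 ≤ L := Real.log_nonneg (by rw [le_div_iff₀ hε0]; linarith)
  set K : ℝ := 1/ε + 1/ε^2 + 1/ε^3 + 1 with hKdef
  have hK0 : 0 < K := by positivity
  have hn1 : (1:ℝ) ≤ (n:ℝ) := by exact_mod_cast hn
  have hn0 : (0:ℝ) < (n:ℝ) := by linarith
  set D : ℝ := (n:ℝ) * (1 + 2*L) with hDdef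
  have hD1 : 1 ≤ D := by nlinarith
  have hden : (0:ℝ) < 1 + ε + ((n:ℝ)-1)*(1+L) := by nlinarith
  have hub2 : ℓ * (1 + ε + ((n:ℝ)-1)*(1+L)) < c * ε^2 := (lt_div_iff₀ hden).1 hℓub
  have hexp : ε^2 * (1 + 2*L) ≤ 1 := by
    have h1 := Real.add_one_le_exp (2*L)
    have h2 : Real.exp (2*L) = 1/ε^2 := by
      rw [two_mul, Real.exp_add, Real.exp_log (by positivity : (0:ℝ) < 1/ε)]
      rw [pow_two]
      field_simp
    rw [h2] at h1
    have h3 : 0 < ε^2 := by positivity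
    calc ε^2*(1+2*L) ≤ ε^2*(1/ε^2) := by nlinarith
      _ = 1 := by field_simp
  have hℓ1 : ℓ ≤ 1 := by nlinarith
  have hℓD : ℓ * D < c := by
    have h4 : ε^2 * D ≤ 1 + ε + ((n:ℝ)-1)*(1+L) := by nlinarith
    have h5 : ℓ * (ε^2 * D) ≤ ℓ * (1+ε+((n:ℝ)-1)*(1+L)) :=
      mul_le_mul_of_nonneg_left h4 hℓ.le
    have h6 : ℓ * (ε^2 * D) < c * ε^2 := lt_of_le_of_lt h5 hub2
    have h3 : 0 < ε^2 := by positivity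
    nlinarith
  set γ : ℝ := c - ℓ * D with hγdef
  have hγ0 : 0 < γ := by rw [hγdef]; linarith
  set R : ℝ := (1 + 2*L)/c with hRdef
  have hRc : R * c = 1 + 2*L := div_mul_cancel₀ _ hc0.ne'
  have hR0 : 0 < R := by
    rw [hRdef]; positivity
  obtain ⟨T₀, hT₀⟩ := exists_nat_gt
    (max (max (1/ℓ) (((n:ℝ)*K)/γ)) ((R+η)*((n:ℝ)*K)/(η*c)))
  refine ⟨T₀, fun T hT v alloc xstar hval hV hspec hx0 hx1 _ => ?_⟩
  have hTX : max (max (1/ℓ) (((n:ℝ)*K)/γ)) ((R+η)*((n:ℝ)*K)/(η*c)) < (T:ℝ) :=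
    lt_of_lt_of_le hT₀ (by exact_mod_cast hT)
  have hT1 : 1 ≤ ℓ * T := by
    have h := lt_of_le_of_lt (le_trans (le_max_left _ _) (le_max_left _ _)) hTX
    rw [div_lt_iff₀ hℓ] at h
    linarith
  have hT2 : (n:ℝ)*K < γ*T := by
    have h := lt_of_le_of_lt (le_trans (le_max_right _ _) (le_max_left _ _)) hTX
    rw [div_lt_iff₀ hγ0] at h
    linarith
  have hT3 : (R+η)*((n:ℝ)*K) < η*c*T := by
    have h := lt_of_le_of_lt (le_max_right _ _) hTX
    have hηc : 0 < η*c := by positivity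
    rw [div_lt_iff₀ hηc] at h
    linarith
  have h01 : ∀ s < T, ∀ k, 0 ≤ v s k ∧ v s k ≤ 1 := by
    intro s hs k
    rcases hval s hs k with h | h
    · rw [h]; exact ⟨le_refl 0, zero_le_one⟩
    · exact ⟨le_trans hε0.le h.1, h.2⟩
  have hT0R : (0:ℝ) ≤ (T:ℝ) := Nat.cast_nonneg T
  set m : ℝ := (c*T - (n:ℝ)*K)/D with hmdef
  have hγc : γ ≤ c := by
    have h0 : 0 ≤ ℓ*D := mul_nonneg hℓ.le (by linarith)
    rw [hγdef]
    linarith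
  have hcT : (n:ℝ)*K < c*T :=
    lt_of_lt_of_le hT2 (mul_le_mul_of_nonneg_right hγc hT0R)
  have hm0 : 0 < m := div_pos (by linarith) (lt_of_lt_of_le one_pos hD1)
  have hUge : ∀ i, m ≤ putil v alloc i T := by
    intro i
    have hsum1 : c*T ≤ ∑ j : Fin n,
        ∑ t ∈ Finset.range T, (if alloc t = j then v t i else 0) := by
      calc c*T ≤ ∑ t ∈ Finset.range T, v t i := hV i
        _ = ∑ t ∈ Finset.range T, ∑ j : Fin n, (if alloc t = j then v t i else 0) := by
            apply Finset.sum_congr rfl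
            intro t _
            rw [Finset.sum_ite_eq]
            simp
        _ = ∑ j : Fin n, ∑ t ∈ Finset.range T, (if alloc t = j then v t i else 0) :=
            Finset.sum_comm
    have henvy : ∀ j : Fin n,
        (∑ t ∈ Finset.range T, if alloc t = j then v t i else 0) ≤
          (1+2*L) * max (ℓ*T) (putil v alloc i T) + K :=
      fun j => PaceProof.envy ε hε0 hε1 hℓ hℓ1 hval hspec hT1 i j
    have hsum2 : c*T ≤ (n:ℝ) * ((1+2*L) * max (ℓ*T) (putil v alloc i T) + K) := by
      calc c*T ≤ ∑ j : Fin n,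
            ∑ t ∈ Finset.range T, (if alloc t = j then v t i else 0) := hsum1
        _ ≤ ∑ _j : Fin n, ((1+2*L) * max (ℓ*T) (putil v alloc i T) + K) :=
            Finset.sum_le_sum (fun j _ => henvy j)
        _ = (n:ℝ) * ((1+2*L) * max (ℓ*T) (putil v alloc i T) + K) := by
            rw [Finset.sum_const, Finset.card_univ, Fintype.card_fin, nsmul_eq_mul]
    rcases le_or_gt (ℓ*T) (putil v alloc i T) with hcase | hcase
    · rw [max_eq_right hcase] at hsum2
      rw [hmdef, div_le_iff₀ (lt_of_lt_of_le one_pos hD1), hDdef]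
      nlinarith
    · exfalso
      rw [max_eq_left hcase.le] at hsum2
      have hexpand : (n:ℝ) * ((1+2*L) * (ℓ*T) + K) = ℓ*D*T + (n:ℝ)*K := by
        rw [hDdef]; ring
      rw [hexpand] at hsum2
      have hgt : γ*(T:ℝ) = c*(T:ℝ) - ℓ*D*(T:ℝ) := by rw [hγdef]; ring
      linarith [hT2]
  have hUst0 : ∀ i : Fin n, 0 ≤ ∑ t ∈ Finset.range T, xstar t i * v t i :=
    fun i => Finset.sum_nonneg (fun t ht =>
      mul_nonneg (hx0 t i) (h01 t (Finset.mem_range.1 ht) i).1)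
  have hUstsum : ∑ i : Fin n, ∑ t ∈ Finset.range T, xstar t i * v t i ≤ (T:ℝ) := by
    calc ∑ i : Fin n, ∑ t ∈ Finset.range T, xstar t i * v t i
        = ∑ t ∈ Finset.range T, ∑ i : Fin n, xstar t i * v t i := Finset.sum_comm
      _ ≤ ∑ _t ∈ Finset.range T, (1:ℝ) := by
          apply Finset.sum_le_sum
          intro t ht
          have htT := Finset.mem_range.1 ht
          calc ∑ i : Fin n, xstar t i * v t i ≤ ∑ i : Fin n, xstar t i :=
                Finset.sum_le_sum (fun i _ => by
                  have h := h01 t htT i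
                  nlinarith [hx0 t i])
            _ ≤ 1 := hx1 t
      _ = T := by simp
  have hmain := PaceProof.amgm_final n hn
    (fun i => ∑ t ∈ Finset.range T, xstar t i * v t i)
    (fun i => putil v alloc i T) m T hm0 hUge hUst0 hUstsum
  have hfinal : (T:ℝ)/((n:ℝ)*m) ≤ R + η := by
    have hD0 : (0:ℝ) < 1 + 2*L := by linarith
    have hnm : (n:ℝ)*m = (c*T - (n:ℝ)*K)/(1+2*L) := by
      rw [hmdef, hDdef]
      field_simp
    rw [hnm, div_div_eq_mul_div,
      div_le_iff₀ (by linarith : (0:ℝ) < c*T - (n:ℝ)*K)]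
    have key : (R+η)*(c*(T:ℝ) - (n:ℝ)*K)
        = (R*c)*(T:ℝ) + η*c*(T:ℝ) - (R+η)*((n:ℝ)*K) := by ring
    rw [hRc] at key
    linarith [hT3]
  exact le_trans hmain hfinal
end

section
/- There exists a family of adversarial two-agent instances showing unbounded envy for integral greedy without a value-ratio assumption: for any a > 2 and horizon T, set v_1^t = 1 for all t and v_2^t = a^{t−T} for all t. Then the integral greedy algorithm (ties to agent 1) allocates exactly one item to agent 1, so agent 1's multiplicative envy satisfies Envy_{12} = U_1(A_2)/U_1(A_1) ≥ T − 1, i.e., worst-case multiplicative envy is Ω(T). -/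
/-- The exponential hard instance: with `v₁ᵗ = 1` and `v₂ᵗ = a^{t-T}` (`a > 2`,
rounds `1,…,T` written `0`-indexed as `t+1`), integral greedy gives agent `1` exactly
one item, so `Envy₁₂ = U₁(A₂)/U₁(A₁) ≥ T - 1`, i.e. worst-case multiplicative envy is
`Ω(T)` without a value-ratio assumption. -/

theorem greedy_omega_T_envy (a : ℝ) (ha : 2 < a) (T : ℕ) (hT : 1 ≤ T)
    (v : ℕ → Fin 2 → ℝ)
    (hv0 : ∀ t < T, v t 0 = 1)
    (hv1 : ∀ t < T, v t 1 = a ^ ((t : ℤ) + 1 - (T : ℤ)))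
    (alloc : ℕ → Option (Fin 2)) (hspec : GreedySpecOn T v alloc) :
    ((Finset.range T).filter (fun t => alloc t = some 0)).card = 1 ∧
      (T : ℝ) - 1 ≤ bundleVal T v alloc 0 1 / bundleVal T v alloc 0 0 := by
  have ha0 : (0:ℝ) < a := by linarith
  have hane : a ≠ 0 := ne_of_gt ha0
  have hfin : ∀ k : Fin 2, k = 0 ∨ k = 1 := by decide
  -- geometric bound
  have geom : ∀ t : ℕ, 1 ≤ t →
      ∑ s ∈ Finset.Ico 1 t, a ^ ((s:ℤ) + 1 - (T:ℤ)) < a ^ ((t:ℤ) + 1 - (T:ℤ)) := by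
    intro t ht
    induction t with
    | zero => omega
    | succ n ih =>
      rcases Nat.lt_or_ge 1 (n+1) with h1 | h1
      · have hn : 1 ≤ n := by omega
        have ih' := ih hn
        have hsplit : ∑ s ∈ Finset.Ico 1 (n+1), a ^ ((s:ℤ)+1-(T:ℤ))
            = (∑ s ∈ Finset.Ico 1 n, a ^ ((s:ℤ)+1-(T:ℤ))) + a ^ ((n:ℤ)+1-(T:ℤ)) :=
          Finset.sum_Ico_succ_top hn _
        have hpow : a ^ (((n+1:ℕ):ℤ)+1-(T:ℤ)) = a ^ ((n:ℤ)+1-(T:ℤ)) * a := by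
          rw [← zpow_add_one₀ hane]
          congr 1
          push_cast
          ring
        have hp : 0 < a ^ ((n:ℤ)+1-(T:ℤ)) := zpow_pos ha0 _
        rw [hsplit, hpow]
        nlinarith
      · have : n = 0 := by omega
        subst this
        have := zpow_pos ha0 (((1:ℕ):ℤ)+1-(T:ℤ))
        simpa using this
  -- the key structural claim
  have key : ∀ t, t < T → alloc t = if t = 0 then some 0 else some 1 := by
    intro t
    induction t using Nat.strong_induction_on with
    | _ t ih =>
    intro htT
    obtain ⟨hnone, hwin⟩ := hspec t htT
    have hv0t : v t 0 = 1 := hv0 t htT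
    have hv1t : v t 1 = a ^ ((t:ℤ)+1-(T:ℤ)) := hv1 t htT
    have hv0pos : 0 < v t 0 := by rw [hv0t]; norm_num
    have hv1pos : 0 < v t 1 := by rw [hv1t]; exact zpow_pos ha0 _
    obtain ⟨i, hi⟩ : ∃ i, alloc t = some i := by
      cases h : alloc t with
      | none =>
        exfalso
        have := hnone.mp h 0
        rw [hv0t] at this; norm_num at this
      | some i => exact ⟨i, rfl⟩
    obtain ⟨hvipos, hcond⟩ := hwin i hi
    by_cases ht0 : t = 0
    · subst ht0
      have hu : ∀ j, util v alloc j 0 = 0 := by intro j; simp [util]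
      have hc := hcond 0 hv0pos
      rw [hu, hu] at hc
      simp only [mul_zero] at hc
      rcases hc with hc | ⟨_, hc⟩
      · exact absurd hc (lt_irrefl 0)
      · have : i = 0 := le_antisymm hc (Fin.zero_le i)
        rw [if_pos rfl, ← this, hi]
    · -- t ≥ 1
      have ht1 : 1 ≤ t := Nat.one_le_iff_ne_zero.mpr ht0
      have ha00 : alloc 0 = some 0 := by
        have h := ih 0 ht1 hT
        rwa [if_pos rfl] at h
      have hu0 : util v alloc 0 t = 1 := by
        unfold util
        rw [Finset.sum_eq_single 0]
        · rw [ha00, if_pos rfl, hv0 0 hT]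
        · intro b hb hb0
          have h := ih b (Finset.mem_range.mp hb) ((Finset.mem_range.mp hb).trans htT)
          rw [if_neg hb0] at h
          rw [h, if_neg (by decide)]
        · intro h
          exact absurd (Finset.mem_range.mpr ht1) h
      have hu1 : util v alloc 1 t = ∑ s ∈ Finset.Ico 1 t, a ^ ((s:ℤ)+1-(T:ℤ)) := by
        unfold util
        rw [Finset.range_eq_Ico,
          ← Finset.sum_Ico_consecutive _ (Nat.zero_le 1) ht1]
        have h0 : ∑ s ∈ Finset.Ico 0 1, (if alloc s = some 1 then v s 1 else 0) = 0 := by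
          simp [ha00]
        rw [h0, zero_add]
        apply Finset.sum_congr rfl
        intro s hs
        obtain ⟨hs1, hst⟩ := Finset.mem_Ico.mp hs
        have hsa := ih s hst (hst.trans htT)
        rw [if_neg (show ¬ s = 0 by omega)] at hsa
        rw [hsa, if_pos rfl, hv1 s (hst.trans htT)]
      rw [if_neg ht0]
      rcases hfin i with rfl | rfl
      · exfalso
        have hc := hcond 1 hv1pos
        rw [hu0, hu1, hv0t, hv1t] at hc
        have hg := geom t ht1
        rcases hc with hc | ⟨hc, _⟩
        · rw [mul_one, one_mul] at hc; linarith
        · rw [mul_one, one_mul] at hc; linarith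
      · exact hi
  -- card computation
  have hfilter : (Finset.range T).filter (fun t => alloc t = some 0) = {0} := by
    ext t
    simp only [Finset.mem_filter, Finset.mem_range, Finset.mem_singleton]
    constructor
    · rintro ⟨htT, hsome⟩
      by_contra h
      rw [key t htT, if_neg h] at hsome
      exact absurd (Option.some_injective _ hsome) (by decide)
    · rintro rfl
      exact ⟨hT, by rw [key 0 hT, if_pos rfl]⟩
  constructor
  · rw [hfilter]; rfl
  · have hb00 : bundleVal T v alloc 0 0 = 1 := by
      unfold bundleVal
      rw [Finset.sum_eq_single 0]
      · rw [key 0 hT, if_pos rfl, if_pos rfl, hv0 0 hT]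
      · intro b hb hb0
        have h := key b (Finset.mem_range.mp hb)
        rw [if_neg hb0] at h
        rw [h, if_neg (by decide)]
      · intro h; exact absurd (Finset.mem_range.mpr hT) h
    have hb01 : bundleVal T v alloc 0 1 = (T:ℝ) - 1 := by
      unfold bundleVal
      rw [Finset.range_eq_Ico, ← Finset.sum_Ico_consecutive _ (Nat.zero_le 1) hT]
      have ha00 : alloc 0 = some 0 := by
        have h := key 0 hT; rwa [if_pos rfl] at h
      have h0 : ∑ s ∈ Finset.Ico 0 1, (if alloc s = some 1 then v s 0 else 0) = 0 := by
        simp [ha00]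
      rw [h0, zero_add]
      have hcongr : ∀ s ∈ Finset.Ico 1 T, (if alloc s = some 1 then v s 0 else 0) = 1 := by
        intro s hs
        obtain ⟨hs1, hsT⟩ := Finset.mem_Ico.mp hs
        have h := key s hsT
        rw [if_neg (show ¬ s = 0 by omega)] at h
        rw [h, if_pos rfl, hv0 s hsT]
      rw [Finset.sum_congr rfl hcongr, Finset.sum_const, Nat.card_Ico, nsmul_eq_mul,
        mul_one, Nat.cast_sub hT, Nat.cast_one]
    rw [hb00, hb01, div_one]
end
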